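/- arXiv:1802.09322 — 6 statements merged into one kernel-verified Lean document; each statement's English description precedes it below -/
import Mathlib

section
/- Let v be a Lipschitz bounded function on R^n with support contained in the unit ball B_1(0). Then there exists a constant C > 0 depending only on n, s, p and the W^{1,∞} norm of v such that |D^s v(x)|^p ≤ C min{1, |x|^{-(n+sp)}} for all x in R^n. -/
open MeasureTheory ENNReal Filter Metric Topology

noncomputable section

/-- Euclidean space ℝ^n. -/
abbrev Eu (n : ℕ) := EuclideanSpace ℝ (Fin n)

/-- `|D^s v(x)|^p = ∫_{ℝ^n} |v(x+h)-v(x)|^p / |h|^{n+sp} dh`,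
the (s,p)-fractional gradient (to the p-th power), as an extended real. -/
def Dsp (n : ℕ) (s p : ℝ) (v : Eu n → ℝ) (x : Eu n) : ℝ≥0∞ :=
  ∫⁻ h, ENNReal.ofReal (|v (x + h) - v x| ^ p / ‖h‖ ^ ((n : ℝ) + s * p))

/-- Gagliardo seminorm `[v]_{s,p}` to the p-th power:
`∬ |v(x)-v(y)|^p/|x-y|^{n+sp} dxdy = ∫ |D^s v(x)|^p dx`. -/
def Gag (n : ℕ) (s p : ℝ) (v : Eu n → ℝ) : ℝ≥0∞ := ∫⁻ x, Dsp n s p v x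

/-- Membership in `D^{s,p}(ℝ^n)`: `v ∈ L^{p*_s}` and finite Gagliardo seminorm. -/
def MemDsp (n : ℕ) (s p : ℝ) (v : Eu n → ℝ) : Prop :=
  MemLp v (ENNReal.ofReal ((n * p) / (n - s * p))) ∧ Gag n s p v < ⊤

/-- The best constant `S` in the fractional Sobolev inequality
`S ‖v‖_{p*_s}^p ≤ [v]_{s,p}^p`. -/
def sobolevS (n : ℕ) (s p : ℝ) : ℝ :=
  sInf {r : ℝ | ∃ v : Eu n → ℝ, ContDiff ℝ (⊤ : ℕ∞) v ∧ HasCompactSupport v ∧ v ≠ 0 ∧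
    r = (Gag n s p v).toReal /
      ((∫ x, |v x| ^ ((n * p) / (n - s * p))) ^ ((n - s * p) / n))}

/-- Weak convergence in `D^{s,p}(ℝ^n)`: boundedness of the Gagliardo seminorms
together with distributional convergence. -/
def WeakConvDsp (n : ℕ) (s p : ℝ) (u : ℕ → Eu n → ℝ) (v : Eu n → ℝ) : Prop :=
  (∃ B : ℝ, ∀ k, Gag n s p (u k) ≤ ENNReal.ofReal B) ∧
  ∀ φ : Eu n → ℝ, ContDiff ℝ (⊤ : ℕ∞) φ → HasCompactSupport φ →
    Tendsto (fun k => ∫ x, u k x * φ x) atTop (𝓝 (∫ x, v x * φ x))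

lemma lint_ball_rpow {n : ℕ} (hn : 0 < n) {c : ℝ} (hc : -(n : ℝ) < c) :
    ∫⁻ h : Eu n in ball 0 1, ENNReal.ofReal (‖h‖ ^ c) < ⊤ := by
  haveI : Nonempty (Fin n) := Fin.pos_iff_nonempty.mp hn
  set u : ℕ → ℝ := fun k => (2 : ℝ)⁻¹ ^ k with hu
  have hupos : ∀ k, 0 < u k := fun k => pow_pos (by norm_num) k
  set A : ℕ → Set (Eu n) := fun k => {h | u (k + 1) ≤ ‖h‖ ∧ ‖h‖ < u k} with hA
  have hAmeas : ∀ k, MeasurableSet (A k) := by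
    intro k
    have : A k = (fun h : Eu n => ‖h‖) ⁻¹' Set.Ico (u (k + 1)) (u k) := rfl
    rw [this]
    exact measurable_norm measurableSet_Ico
  have hcover : ball (0 : Eu n) 1 ⊆ {0} ∪ ⋃ k, A k := by
    intro h hh
    rcases eq_or_ne h 0 with rfl | h0
    · exact Or.inl rfl
    · right
      have hpos : 0 < ‖h‖ := norm_pos_iff.mpr h0
      have hlt1 : ‖h‖ < 1 := by simpa [mem_ball, dist_zero_right] using hh
      have hex : ∃ k, u (k + 1) ≤ ‖h‖ := by
        obtain ⟨k, hk⟩ := exists_pow_lt_of_lt_one hpos (by norm_num : (2 : ℝ)⁻¹ < 1)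
        exact ⟨k, le_of_lt (lt_of_le_of_lt
          (pow_le_pow_of_le_one (by norm_num) (by norm_num) (Nat.le_succ k)) hk)⟩
      refine Set.mem_iUnion.2 ⟨Nat.find hex, Nat.find_spec hex, ?_⟩
      rcases Nat.eq_zero_or_pos (Nat.find hex) with h0' | h0'
      · rw [h0']; simpa [hu] using hlt1
      · have hmin := Nat.find_min hex (Nat.sub_lt h0' one_pos)
        push_neg at hmin
        have heq : Nat.find hex - 1 + 1 = Nat.find hex := by omega
        rwa [heq] at hmin
  have hzero : ∫⁻ h in ({0} : Set (Eu n)), ENNReal.ofReal (‖h‖ ^ c) = 0 := by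
    rw [Measure.restrict_eq_zero.mpr (measure_singleton _), lintegral_zero_measure]
  set q : ℝ := (2 : ℝ) ^ (-((n : ℝ) + c)) with hq
  have hq01 : 0 < q ∧ q < 1 := by
    constructor
    · exact Real.rpow_pos_of_pos two_pos _
    · exact Real.rpow_lt_one_of_one_lt_of_neg one_lt_two (by linarith)
  set D : ℝ≥0∞ := ENNReal.ofReal ((2 : ℝ) ^ (-c) + 1) * volume (ball (0 : Eu n) 1) with hD
  have hterm : ∀ k, ∫⁻ h in A k, ENNReal.ofReal (‖h‖ ^ c) ≤ D * ENNReal.ofReal q ^ k := by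
    intro k
    have hbound : ∀ h ∈ A k, ENNReal.ofReal (‖h‖ ^ c)
        ≤ ENNReal.ofReal (u (k + 1) ^ c + u k ^ c) := by
      intro h hh
      apply ENNReal.ofReal_le_ofReal
      rcases le_or_gt 0 c with hc0 | hc0
      · have h1 : ‖h‖ ^ c ≤ u k ^ c :=
          Real.rpow_le_rpow (norm_nonneg _) hh.2.le hc0
        have h2 : 0 ≤ u (k + 1) ^ c := Real.rpow_nonneg (hupos _).le _
        linarith
      · have h1 : ‖h‖ ^ c ≤ u (k + 1) ^ c :=
          Real.rpow_le_rpow_of_nonpos (hupos _) hh.1 hc0.le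
        have h2 : 0 ≤ u k ^ c := Real.rpow_nonneg (hupos _).le _
        linarith
    calc ∫⁻ h in A k, ENNReal.ofReal (‖h‖ ^ c)
        ≤ ∫⁻ _ in A k, ENNReal.ofReal (u (k + 1) ^ c + u k ^ c) :=
          setLIntegral_mono' (hAmeas k) hbound
      _ = ENNReal.ofReal (u (k + 1) ^ c + u k ^ c) * volume (A k) :=
          setLIntegral_const _ _
      _ ≤ ENNReal.ofReal (u (k + 1) ^ c + u k ^ c) * volume (ball (0 : Eu n) (u k)) := by
          apply mul_le_mul' le_rfl
          apply measure_mono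
          intro h hh
          simpa [mem_ball, dist_zero_right] using hh.2
      _ = D * ENNReal.ofReal q ^ k := by
          rw [show volume (ball (0 : Eu n) (u k)) =
              ENNReal.ofReal (u k ^ n) * volume (ball (0 : Eu n) 1) by
            simpa using Measure.addHaar_ball_of_pos
              (volume : Measure (Eu n)) (0 : Eu n) (hupos k)]
          have h2 : ∀ m : ℕ, u m = (2 : ℝ) ^ (-(m : ℝ)) := by
            intro m
            simp only [hu]
            rw [inv_pow, ← Real.rpow_natCast (2 : ℝ) m,
              ← Real.rpow_neg (by norm_num : (0:ℝ) ≤ 2)]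
          have hBnn : 0 ≤ u (k + 1) ^ c + u k ^ c := by
            have := Real.rpow_nonneg (hupos (k+1)).le c
            have := Real.rpow_nonneg (hupos k).le c
            linarith
          have hreal : (u (k + 1) ^ c + u k ^ c) * u k ^ n
              = ((2 : ℝ) ^ (-c) + 1) * q ^ k := by
            rw [h2 (k + 1), h2 k, ← Real.rpow_natCast ((2:ℝ) ^ (-(k:ℝ))) n,
              ← Real.rpow_mul (by norm_num), ← Real.rpow_mul (by norm_num),
              ← Real.rpow_mul (by norm_num), hq,
              ← Real.rpow_natCast ((2:ℝ) ^ (-((n:ℝ) + c))) k,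
              ← Real.rpow_mul (by norm_num), add_mul,
              ← Real.rpow_add two_pos, ← Real.rpow_add two_pos,
              add_mul ((2:ℝ) ^ (-c)) 1, one_mul, ← Real.rpow_add two_pos]
            push_cast
            congr 2 <;> ring
          calc ENNReal.ofReal (u (k + 1) ^ c + u k ^ c)
                * (ENNReal.ofReal (u k ^ n) * volume (ball (0 : Eu n) 1))
              = ENNReal.ofReal ((u (k + 1) ^ c + u k ^ c) * u k ^ n)
                * volume (ball (0 : Eu n) 1) := by
                rw [ENNReal.ofReal_mul hBnn]; ring
            _ = ENNReal.ofReal (((2 : ℝ) ^ (-c) + 1) * q ^ k)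
                * volume (ball (0 : Eu n) 1) := by rw [hreal]
            _ = D * ENNReal.ofReal q ^ k := by
                rw [ENNReal.ofReal_mul (by positivity),
                  ENNReal.ofReal_pow hq01.1.le, hD]
                ring
  calc ∫⁻ h : Eu n in ball 0 1, ENNReal.ofReal (‖h‖ ^ c)
      ≤ ∫⁻ h in ({0} ∪ ⋃ k, A k : Set (Eu n)), ENNReal.ofReal (‖h‖ ^ c) :=
        lintegral_mono_set hcover
    _ ≤ (∫⁻ h in ({0} : Set (Eu n)), ENNReal.ofReal (‖h‖ ^ c))
        + ∫⁻ h in (⋃ k, A k : Set (Eu n)), ENNReal.ofReal (‖h‖ ^ c) :=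
        lintegral_union_le _ _ _
    _ ≤ 0 + ∑' k, ∫⁻ h in A k, ENNReal.ofReal (‖h‖ ^ c) := by
        rw [hzero]
        exact add_le_add le_rfl (lintegral_iUnion_le _ _)
    _ ≤ ∑' k, D * ENNReal.ofReal q ^ k := by
        rw [zero_add]
        exact ENNReal.tsum_le_tsum hterm
    _ = D * (1 - ENNReal.ofReal q)⁻¹ := by
        rw [ENNReal.tsum_mul_left, ENNReal.tsum_geometric]
    _ < ⊤ := by
        apply ENNReal.mul_lt_top
        · exact ENNReal.mul_lt_top ENNReal.ofReal_lt_top measure_ball_lt_top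
        · rw [ENNReal.inv_lt_top]
          apply tsub_pos_of_lt
          rw [← ENNReal.ofReal_one]
          exact ENNReal.ofReal_lt_ofReal_iff_of_nonneg hq01.1.le |>.mpr hq01.2

lemma lint_tail_rpow {n : ℕ} {a : ℝ} (ha : (n : ℝ) < a) :
    ∫⁻ h : Eu n in (ball (0 : Eu n) 1)ᶜ, ENNReal.ofReal (‖h‖ ^ (-a)) < ⊤ := by
  have ha0 : 0 ≤ a := le_trans (Nat.cast_nonneg n) ha.le
  have key : ∀ h : Eu n, h ∈ (ball (0 : Eu n) 1)ᶜ →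
      ENNReal.ofReal (‖h‖ ^ (-a)) ≤ ENNReal.ofReal ((2 : ℝ) ^ a * (1 + ‖h‖) ^ (-a)) := by
    intro h hh
    have h1 : (1 : ℝ) ≤ ‖h‖ := by
      simp only [Set.mem_compl_iff, mem_ball, dist_zero_right, not_lt] at hh
      exact hh
    apply ENNReal.ofReal_le_ofReal
    have hmid : (1 + ‖h‖) / 2 ≤ ‖h‖ := by linarith
    have := Real.rpow_le_rpow_of_nonpos (by positivity) hmid (neg_nonpos.mpr ha0)
    calc ‖h‖ ^ (-a) ≤ ((1 + ‖h‖) / 2) ^ (-a) := this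
      _ = (2 : ℝ) ^ a * (1 + ‖h‖) ^ (-a) := by
        rw [Real.div_rpow (by positivity) (by norm_num), Real.rpow_neg (by norm_num : (0:ℝ) ≤ 2),
          div_eq_mul_inv, inv_inv, mul_comm]
  calc ∫⁻ h : Eu n in (ball (0 : Eu n) 1)ᶜ, ENNReal.ofReal (‖h‖ ^ (-a))
      ≤ ∫⁻ h : Eu n in (ball (0 : Eu n) 1)ᶜ,
          ENNReal.ofReal ((2 : ℝ) ^ a * (1 + ‖h‖) ^ (-a)) :=
        setLIntegral_mono' measurableSet_ball.compl key
    _ ≤ ∫⁻ h : Eu n, ENNReal.ofReal ((2 : ℝ) ^ a * (1 + ‖h‖) ^ (-a)) :=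
        setLIntegral_le_lintegral _ _
    _ = ENNReal.ofReal ((2 : ℝ) ^ a) * ∫⁻ h : Eu n, ENNReal.ofReal ((1 + ‖h‖) ^ (-a)) := by
        simp_rw [ENNReal.ofReal_mul (le_of_lt (Real.rpow_pos_of_pos two_pos a))]
        exact lintegral_const_mul' _ _ ENNReal.ofReal_ne_top
    _ < ⊤ := by
        apply ENNReal.mul_lt_top ENNReal.ofReal_lt_top
        apply finite_integral_one_add_norm
        simpa using ha

/-- decay of the fractional gradient of a Lipschitz bounded function
supported in the unit ball: `|D^s v(x)|^p ≤ C min{1, |x|^{-(n+sp)}}`. -/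
theorem decay_fractional_gradient (n : ℕ) (s p : ℝ) (hn : 0 < n)
    (hs : 0 < s) (hs1 : s < 1) (hp : 1 ≤ p) (hspn : s * p < n)
    (v : Eu n → ℝ) (L : NNReal) (hlip : LipschitzWith L v)
    (M : ℝ) (hbd : ∀ x, |v x| ≤ M)
    (hsupp : tsupport v ⊆ closedBall (0 : Eu n) 1) :
    ∃ C > (0 : ℝ), ∀ x : Eu n,
      Dsp n s p v x ≤
        ENNReal.ofReal C * min 1 (ENNReal.ofReal ‖x‖ ^ (-((n : ℝ) + s * p))) := by
  have hp0 : (0 : ℝ) < p := lt_of_lt_of_le one_pos hp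
  set a : ℝ := (n : ℝ) + s * p with ha_def
  have hsp0 : 0 < s * p := mul_pos hs hp0
  have han : (n : ℝ) < a := by simp only [ha_def]; linarith
  have hn0 : (0 : ℝ) < n := by exact_mod_cast hn
  have ha0 : 0 < a := lt_trans hn0 han
  have hM : 0 ≤ M := le_trans (abs_nonneg _) (hbd 0)
  -- uniform bound
  have hK1 : ∫⁻ h : Eu n in ball 0 1, ENNReal.ofReal (‖h‖ ^ (p - a)) < ⊤ := by
    apply lint_ball_rpow hn
    have : 0 < p * (1 - s) := mul_pos hp0 (by linarith)
    simp only [ha_def]; nlinarith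
  have hK2 : ∫⁻ h : Eu n in (ball (0 : Eu n) 1)ᶜ, ENNReal.ofReal (‖h‖ ^ (-a)) < ⊤ :=
    lint_tail_rpow han
  set K1 := ∫⁻ h : Eu n in ball 0 1, ENNReal.ofReal (‖h‖ ^ (p - a)) with hK1d
  set K2 := ∫⁻ h : Eu n in (ball (0 : Eu n) 1)ᶜ, ENNReal.ofReal (‖h‖ ^ (-a)) with hK2d
  set KK := ENNReal.ofReal ((L : ℝ) ^ p) * K1 + ENNReal.ofReal ((2 * M) ^ p) * K2 with hKKd
  have hKKfin : KK < ⊤ := by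
    apply ENNReal.add_lt_top.mpr
    exact ⟨ENNReal.mul_lt_top ENNReal.ofReal_lt_top hK1,
      ENNReal.mul_lt_top ENNReal.ofReal_lt_top hK2⟩
  have huniform : ∀ x : Eu n, Dsp n s p v x ≤ KK := by
    intro x
    rw [Dsp, ← lintegral_add_compl
      (fun h : Eu n => ENNReal.ofReal (|v (x + h) - v x| ^ p / ‖h‖ ^ a))
      (measurableSet_ball (x := (0 : Eu n)) (ε := 1))]
    apply add_le_add
    · calc ∫⁻ h : Eu n in ball 0 1, ENNReal.ofReal (|v (x + h) - v x| ^ p / ‖h‖ ^ a)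
          ≤ ∫⁻ h : Eu n in ball 0 1, ENNReal.ofReal ((L : ℝ) ^ p * ‖h‖ ^ (p - a)) := by
            apply setLIntegral_mono' measurableSet_ball
            intro h _
            apply ENNReal.ofReal_le_ofReal
            rcases eq_or_ne h 0 with rfl | h0
            · simp [Real.zero_rpow (ne_of_gt hp0)]
              positivity
            · have hh0 : 0 < ‖h‖ := norm_pos_iff.mpr h0
              have hlip1 : |v (x + h) - v x| ≤ (L : ℝ) * ‖h‖ := by
                have := hlip.dist_le_mul (x + h) x
                simpa [Real.dist_eq, dist_eq_norm, add_sub_cancel_left] using this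
              have h1 : |v (x + h) - v x| ^ p ≤ ((L : ℝ) * ‖h‖) ^ p :=
                Real.rpow_le_rpow (abs_nonneg _) hlip1 hp0.le
              have h2 : ((L : ℝ) * ‖h‖) ^ p = (L : ℝ) ^ p * ‖h‖ ^ p :=
                Real.mul_rpow (NNReal.coe_nonneg L) (norm_nonneg _)
              calc |v (x + h) - v x| ^ p / ‖h‖ ^ a
                  ≤ (L : ℝ) ^ p * ‖h‖ ^ p / ‖h‖ ^ a := by
                    apply div_le_div₀ (by positivity) (by rw [← h2]; exact h1)
                      (Real.rpow_pos_of_pos hh0 a) le_rfl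
                _ = (L : ℝ) ^ p * ‖h‖ ^ (p - a) := by
                    rw [mul_div_assoc, ← Real.rpow_sub hh0]
        _ = ENNReal.ofReal ((L : ℝ) ^ p) * K1 := by
            simp_rw [ENNReal.ofReal_mul (Real.rpow_nonneg (NNReal.coe_nonneg L) p)]
            exact lintegral_const_mul' _ _ ENNReal.ofReal_ne_top
    · calc ∫⁻ h : Eu n in (ball (0:Eu n) 1)ᶜ, ENNReal.ofReal (|v (x + h) - v x| ^ p / ‖h‖ ^ a)
          ≤ ∫⁻ h : Eu n in (ball (0:Eu n) 1)ᶜ, ENNReal.ofReal ((2 * M) ^ p * ‖h‖ ^ (-a)) := by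
            apply setLIntegral_mono' measurableSet_ball.compl
            intro h hh
            have h1 : (1 : ℝ) ≤ ‖h‖ := by
              simp only [Set.mem_compl_iff, mem_ball, dist_zero_right, not_lt] at hh
              exact hh
            have hh0 : 0 < ‖h‖ := lt_of_lt_of_le one_pos h1
            apply ENNReal.ofReal_le_ofReal
            have hnum : |v (x + h) - v x| ≤ 2 * M := by
              have := abs_sub (v (x + h)) (v x)
              have b1 := hbd (x + h); have b2 := hbd x
              linarith
            have h2 : |v (x + h) - v x| ^ p ≤ (2 * M) ^ p :=
              Real.rpow_le_rpow (abs_nonneg _) hnum hp0.le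
            calc |v (x + h) - v x| ^ p / ‖h‖ ^ a
                ≤ (2 * M) ^ p / ‖h‖ ^ a :=
                  div_le_div₀ (Real.rpow_nonneg (by linarith) p) h2
                    (Real.rpow_pos_of_pos hh0 a) le_rfl
              _ = (2 * M) ^ p * ‖h‖ ^ (-a) := by
                  rw [Real.rpow_neg (norm_nonneg _), div_eq_mul_inv]
        _ = ENNReal.ofReal ((2 * M) ^ p) * K2 := by
            have h2M : (0:ℝ) ≤ (2 * M) ^ p := Real.rpow_nonneg (by linarith) p
            simp_rw [ENNReal.ofReal_mul h2M]
            exact lintegral_const_mul' _ _ ENNReal.ofReal_ne_top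
  -- decay bound
  set Vol : ℝ := (volume (closedBall (0 : Eu n) 1)).toReal with hVol
  have hVol0 : 0 ≤ Vol := ENNReal.toReal_nonneg
  set C2 : ℝ := M ^ p * 2 ^ a * Vol with hC2
  have hC20 : 0 ≤ C2 := by
    have : (0:ℝ) ≤ M ^ p := Real.rpow_nonneg hM p
    have : (0:ℝ) < (2:ℝ) ^ a := Real.rpow_pos_of_pos two_pos a
    positivity
  have hdecay : ∀ x : Eu n, 2 ≤ ‖x‖ →
      Dsp n s p v x ≤ ENNReal.ofReal C2 * ENNReal.ofReal (‖x‖ ^ (-a)) := by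
    intro x hx2
    have hx0 : (0:ℝ) < ‖x‖ := lt_of_lt_of_le two_pos hx2
    have hvx : v x = 0 := by
      apply image_eq_zero_of_notMem_tsupport
      intro hmem
      have := hsupp hmem
      rw [mem_closedBall, dist_zero_right] at this
      linarith
    have hpt : ∀ h : Eu n, ENNReal.ofReal (|v (x + h) - v x| ^ p / ‖h‖ ^ a)
        ≤ (closedBall (-x) 1).indicator
          (fun _ => ENNReal.ofReal (M ^ p * 2 ^ a * ‖x‖ ^ (-a))) h := by
      intro h
      by_cases hmem : h ∈ closedBall (-x) 1
      · rw [Set.indicator_of_mem hmem]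
        apply ENNReal.ofReal_le_ofReal
        have hx1 : ‖x + h‖ ≤ 1 := by
          rw [mem_closedBall, dist_eq_norm, sub_neg_eq_add, add_comm] at hmem
          exact hmem
        have hnum : |v (x + h) - v x| ≤ M := by rw [hvx, sub_zero]; exact hbd _
        have hhn : ‖x‖ / 2 ≤ ‖h‖ := by
          have h3 : ‖x‖ ≤ ‖x + h‖ + ‖h‖ := by
            have := norm_sub_le (x + h) h
            simpa using this
          linarith
        have hhpos : (0:ℝ) < ‖h‖ := lt_of_lt_of_le (by linarith) hhn
        have hd2 : (0:ℝ) < ‖x‖ / 2 := by linarith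
        calc |v (x + h) - v x| ^ p / ‖h‖ ^ a
            ≤ M ^ p / (‖x‖ / 2) ^ a := by
              apply div_le_div₀ (Real.rpow_nonneg hM p)
                (Real.rpow_le_rpow (abs_nonneg _) hnum hp0.le)
                (Real.rpow_pos_of_pos hd2 a)
                (Real.rpow_le_rpow hd2.le hhn ha0.le)
          _ = M ^ p * 2 ^ a * ‖x‖ ^ (-a) := by
              rw [Real.div_rpow (norm_nonneg _) (by norm_num : (0:ℝ) ≤ 2),
                div_div_eq_mul_div, Real.rpow_neg (norm_nonneg _), div_eq_mul_inv]
      · rw [Set.indicator_of_notMem hmem]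
        have hz : v (x + h) = 0 := by
          apply image_eq_zero_of_notMem_tsupport
          intro hmem'
          apply hmem
          have := hsupp hmem'
          rw [mem_closedBall, dist_zero_right] at this
          rw [mem_closedBall, dist_eq_norm, sub_neg_eq_add, add_comm]
          exact this
        simp [hz, hvx, Real.zero_rpow (ne_of_gt hp0)]
    calc Dsp n s p v x
        ≤ ∫⁻ h, (closedBall (-x) 1).indicator
            (fun _ => ENNReal.ofReal (M ^ p * 2 ^ a * ‖x‖ ^ (-a))) h :=
          lintegral_mono hpt
      _ = ENNReal.ofReal (M ^ p * 2 ^ a * ‖x‖ ^ (-a)) * volume (closedBall (-x) 1) := by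
          rw [lintegral_indicator measurableSet_closedBall, setLIntegral_const]
      _ = ENNReal.ofReal (M ^ p * 2 ^ a * ‖x‖ ^ (-a)) * ENNReal.ofReal Vol := by
          rw [Measure.addHaar_closedBall_center (volume : Measure (Eu n)) (-x),
            hVol, ENNReal.ofReal_toReal measure_closedBall_lt_top.ne]
      _ = ENNReal.ofReal C2 * ENNReal.ofReal (‖x‖ ^ (-a)) := by
          rw [← ENNReal.ofReal_mul (by positivity), ← ENNReal.ofReal_mul ?hnn, hC2]
          · ring_nf
          case hnn =>
            have h1 : (0:ℝ) ≤ M ^ p := Real.rpow_nonneg hM p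
            have h2 : (0:ℝ) < (2:ℝ) ^ a := Real.rpow_pos_of_pos two_pos a
            positivity
  -- combine
  set C1 : ℝ := KK.toReal with hC1
  have hC10 : 0 ≤ C1 := ENNReal.toReal_nonneg
  have h2a1 : (1:ℝ) ≤ (2:ℝ) ^ a := Real.one_le_rpow one_le_two ha0.le
  refine ⟨(C1 + C2 + 1) * 2 ^ a, by nlinarith, ?_⟩
  set C : ℝ := (C1 + C2 + 1) * 2 ^ a with hC
  intro x
  by_cases hx2 : 2 ≤ ‖x‖
  · have hx0 : (0:ℝ) < ‖x‖ := lt_of_lt_of_le two_pos hx2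
    have hm : ENNReal.ofReal ‖x‖ ^ (-a) ≤ 1 := by
      rw [ENNReal.ofReal_rpow_of_pos hx0, ← ENNReal.ofReal_one]
      exact ENNReal.ofReal_le_ofReal
        (Real.rpow_le_one_of_one_le_of_nonpos (by linarith) (neg_nonpos.mpr ha0.le))
    rw [min_eq_right hm]
    calc Dsp n s p v x ≤ ENNReal.ofReal C2 * ENNReal.ofReal (‖x‖ ^ (-a)) := hdecay x hx2
      _ ≤ ENNReal.ofReal C * (ENNReal.ofReal ‖x‖ ^ (-a)) := by
          rw [ENNReal.ofReal_rpow_of_pos hx0]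
          apply mul_le_mul' _ le_rfl
          apply ENNReal.ofReal_le_ofReal
          nlinarith
  · push_neg at hx2
    have hkey : ENNReal.ofReal ((2:ℝ) ^ (-a)) ≤ min 1 (ENNReal.ofReal ‖x‖ ^ (-a)) := by
      refine le_min ?_ ?_
      · rw [← ENNReal.ofReal_one]
        exact ENNReal.ofReal_le_ofReal
          (Real.rpow_le_one_of_one_le_of_nonpos one_le_two (neg_nonpos.mpr ha0.le))
      · have heq1 : ENNReal.ofReal ((2:ℝ) ^ (-a)) = (ENNReal.ofReal 2 ^ a)⁻¹ := by
          rw [← ENNReal.ofReal_rpow_of_pos two_pos, ENNReal.rpow_neg]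
        have heq2 : ENNReal.ofReal ‖x‖ ^ (-a) = (ENNReal.ofReal ‖x‖ ^ a)⁻¹ :=
          ENNReal.rpow_neg _ _
        rw [heq1, heq2, ENNReal.inv_le_inv]
        exact ENNReal.rpow_le_rpow (ENNReal.ofReal_le_ofReal hx2.le) ha0.le
    calc Dsp n s p v x ≤ KK := huniform x
      _ = ENNReal.ofReal C1 := (ENNReal.ofReal_toReal hKKfin.ne).symm
      _ ≤ ENNReal.ofReal (C * 2 ^ (-a)) := by
          apply ENNReal.ofReal_le_ofReal
          have h1 : C * 2 ^ (-a) = C1 + C2 + 1 := by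
            rw [hC, mul_assoc, ← Real.rpow_add two_pos, add_neg_cancel, Real.rpow_zero,
              mul_one]
          rw [h1]; linarith
      _ = ENNReal.ofReal C * ENNReal.ofReal ((2:ℝ) ^ (-a)) := by
          rw [← ENNReal.ofReal_mul (by nlinarith)]
      _ ≤ ENNReal.ofReal C * min 1 (ENNReal.ofReal ‖x‖ ^ (-a)) :=
          mul_le_mul' le_rfl hkey
end
end

section
/- Let φ be a Lipschitz bounded function on R^n supported in the unit ball, and for r > 0, x_0 ∈ R^n set φ_{r,x_0}(x) = φ((x-x_0)/r). Then there is a constant C depending only on n, s, p and ||φ||_{W^{1,∞}} such that |D^s φ_{r,x_0}(x)|^p ≤ C min{ r^{-sp}, r^n |x-x_0|^{-(n+sp)} } for all x. -/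
open MeasureTheory ENNReal Filter Metric Topology

noncomputable section

section Helpers
open Set Module

/-- Scaling of a Lebesgue integral under dilation. -/
lemma lintegral_scale (n : ℕ) (f : Eu n → ℝ≥0∞) {r : ℝ} (hr : 0 < r) :
    ∫⁻ x, f x = ENNReal.ofReal (r ^ (n : ℕ)) * ∫⁻ x, f (r • x) := by
  have hrn : (0:ℝ) < r ^ (n:ℕ) := pow_pos hr n
  have h1 : ∫⁻ x, f (r • x) = ∫⁻ y, f y ∂(Measure.map (fun x : Eu n => r • x) volume) := by
    exact (lintegral_map_equiv f ((Homeomorph.smul (Units.mk0 r hr.ne')).toMeasurableEquiv)).symm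
  rw [h1, Measure.map_addHaar_smul volume hr.ne', lintegral_smul_measure,
    finrank_euclideanSpace_fin, abs_of_pos (inv_pos.2 hrn), smul_eq_mul, ← mul_assoc,
    ← ENNReal.ofReal_mul hrn.le, mul_inv_cancel₀ hrn.ne', ENNReal.ofReal_one, one_mul]


lemma lintegral_ball_rpow_lt_top (n : ℕ) (hn : 0 < n) {a : ℝ} (han : -(n:ℝ) < a) (ha : a < 0) :
    ∫⁻ h in ball (0 : Eu n) 1, ENNReal.ofReal (‖h‖ ^ a) < ⊤ := by
  have hfr : finrank ℝ (Eu n) = n := finrank_euclideanSpace_fin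
  rw [lintegral_eq_lintegral_meas_le _
    (Eventually.of_forall fun h => Real.rpow_nonneg (norm_nonneg _) a)
    (Measurable.aemeasurable (by fun_prop))]
  set F : ℝ → ℝ≥0∞ := fun t =>
    (volume.restrict (ball (0 : Eu n) 1)) {h : Eu n | t ≤ ‖h‖ ^ a} with hF
  calc ∫⁻ t in Ioi (0:ℝ), F t
      ≤ ∫⁻ t in Ioc (0:ℝ) 1 ∪ Ioi 1, F t := lintegral_mono_set Ioi_subset_Ioc_union_Ioi
    _ ≤ (∫⁻ t in Ioc (0:ℝ) 1, F t) + ∫⁻ t in Ioi (1:ℝ), F t := lintegral_union_le _ _ _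
    _ < ⊤ := ENNReal.add_lt_top.2 ⟨?_, ?_⟩
  · have hb : ∀ t ∈ Ioc (0:ℝ) 1, F t ≤ volume (ball (0 : Eu n) 1) := by
      intro t _
      calc F t ≤ (volume.restrict (ball (0 : Eu n) 1)) univ := measure_mono (subset_univ _)
        _ = volume (ball (0 : Eu n) 1) := by simp
    calc ∫⁻ t in Ioc (0:ℝ) 1, F t ≤ ∫⁻ _ in Ioc (0:ℝ) 1, volume (ball (0 : Eu n) 1) :=
          setLIntegral_mono' measurableSet_Ioc hb
      _ = volume (ball (0 : Eu n) 1) * volume (Ioc (0:ℝ) 1) := setLIntegral_const _ _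
      _ < ⊤ := ENNReal.mul_lt_top measure_ball_lt_top (by simp)
  · have hb : ∀ t ∈ Ioi (1:ℝ), F t ≤
        ENNReal.ofReal (t ^ (a⁻¹ * n)) * volume (ball (0 : Eu n) 1) := by
      intro t ht
      have ht0 : (0:ℝ) < t := lt_trans one_pos ht
      have hsub : {h : Eu n | t ≤ ‖h‖ ^ a} ⊆ closedBall (0 : Eu n) (t ^ a⁻¹) := by
        intro h hh
        simp only [mem_setOf_eq] at hh
        have hh0 : h ≠ 0 := by
          rintro rfl
          rw [norm_zero, Real.zero_rpow ha.ne] at hh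
          linarith
        have hpos : 0 < ‖h‖ := norm_pos_iff.2 hh0
        rw [mem_closedBall_zero_iff]
        exact (Real.le_rpow_inv_iff_of_neg hpos ht0 ha).2 hh
      calc F t ≤ volume (closedBall (0 : Eu n) (t ^ a⁻¹)) :=
            le_trans (Measure.restrict_le_self _) (measure_mono hsub)
        _ = ENNReal.ofReal ((t ^ a⁻¹) ^ (finrank ℝ (Eu n))) * volume (ball (0 : Eu n) 1) :=
            Measure.addHaar_closedBall _ _ (Real.rpow_nonneg ht0.le _)
        _ = ENNReal.ofReal (t ^ (a⁻¹ * n)) * volume (ball (0 : Eu n) 1) := by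
            rw [hfr, ← Real.rpow_natCast (t ^ a⁻¹) n, ← Real.rpow_mul ht0.le]
    have hint : a⁻¹ * n < -1 := by
      rw [inv_mul_eq_div, div_lt_iff_of_neg ha]
      linarith
    calc ∫⁻ t in Ioi (1:ℝ), F t
        ≤ ∫⁻ t in Ioi (1:ℝ), ENNReal.ofReal (t ^ (a⁻¹ * n)) * volume (ball (0 : Eu n) 1) :=
          setLIntegral_mono' measurableSet_Ioi hb
      _ = (∫⁻ t in Ioi (1:ℝ), ENNReal.ofReal (t ^ (a⁻¹ * n))) * volume (ball (0 : Eu n) 1) :=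
          lintegral_mul_const' _ _ measure_ball_lt_top.ne
      _ < ⊤ := ENNReal.mul_lt_top
          ((integrableOn_Ioi_rpow_of_lt hint one_pos).setLIntegral_lt_top)
          measure_ball_lt_top


lemma D_unif (n : ℕ) (s p : ℝ) (hn : 0 < n) (hs : 0 < s) (hs1 : s < 1) (hp : 1 ≤ p)
    (φ : Eu n → ℝ) (L : NNReal) (hlip : LipschitzWith L φ) (M : ℝ) (hbd : ∀ x, |φ x| ≤ M) :
    ∃ C > (0:ℝ), ∀ z : Eu n,
      (∫⁻ u, ENNReal.ofReal (|φ (z + u) - φ z| ^ p / ‖u‖ ^ ((n:ℝ) + s * p)))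
        ≤ ENNReal.ofReal C := by
  haveI : Nonempty (Fin n) := ⟨⟨0, hn⟩⟩
  haveI : Nontrivial (Eu n) := inferInstance
  have hfr : finrank ℝ (Eu n) = n := finrank_euclideanSpace_fin
  have hp0 : 0 < p := lt_of_lt_of_le one_pos hp
  have hsp : 0 < s * p := mul_pos hs hp0
  set q : ℝ := (n:ℝ) + s * p with hqdef
  have hq0 : 0 < q := by positivity
  have hnq : (n:ℝ) < q := by simp only [hqdef]; linarith
  have hM0 : 0 ≤ M := le_trans (abs_nonneg _) (hbd 0)
  set a : ℝ := p - q with hadef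
  have han : -(n:ℝ) < a := by
    simp only [hadef, hqdef]
    nlinarith
  set a' : ℝ := min a (-(1:ℝ)/2) with ha'def
  have ha' : a' < 0 := lt_of_le_of_lt (min_le_right _ _) (by norm_num)
  have ha'n : -(n:ℝ) < a' := by
    have h1 : (1:ℝ) ≤ n := by exact_mod_cast hn
    apply lt_min han (by linarith)
  have ha'a : a' ≤ a := min_le_left _ _
  set IA : ℝ≥0∞ := ∫⁻ u in ball (0 : Eu n) 1, ENNReal.ofReal (‖u‖ ^ a') with hIA
  have hIAfin : IA < ⊤ := lintegral_ball_rpow_lt_top n hn ha'n ha'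
  set IB : ℝ≥0∞ := ∫⁻ u : Eu n, ENNReal.ofReal ((1 + ‖u‖) ^ (-q)) with hIB
  have hIBfin : IB < ⊤ := by
    apply finite_integral_one_add_norm
    rw [hfr]; exact hnq
  set 𝒞 : ℝ≥0∞ := ENNReal.ofReal ((L:ℝ)^p) * IA + ENNReal.ofReal ((2*M)^p * 2^q) * IB with h𝒞def
  have h𝒞 : 𝒞 < ⊤ :=
    ENNReal.add_lt_top.2 ⟨ENNReal.mul_lt_top ENNReal.ofReal_lt_top hIAfin,
      ENNReal.mul_lt_top ENNReal.ofReal_lt_top hIBfin⟩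
  refine ⟨𝒞.toReal + 1, by positivity, fun z => ?_⟩
  have main : (∫⁻ u, ENNReal.ofReal (|φ (z + u) - φ z| ^ p / ‖u‖ ^ q)) ≤ 𝒞 := by
    rw [← lintegral_add_compl (fun u : Eu n => ENNReal.ofReal (|φ (z + u) - φ z| ^ p / ‖u‖ ^ q))
      (measurableSet_ball (x := (0:Eu n)) (ε := 1))]
    apply add_le_add
    · -- ball part
      have hz0 : ∀ᵐ u : Eu n ∂volume, u ≠ 0 := by
        rw [ae_iff]
        simp only [ne_eq, not_not, setOf_eq_eq_singleton]
        exact measure_singleton 0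
      have hptwise : ∀ᵐ u ∂(volume.restrict (ball (0 : Eu n) 1)),
          ENNReal.ofReal (|φ (z + u) - φ z| ^ p / ‖u‖ ^ q)
            ≤ ENNReal.ofReal ((L:ℝ)^p * ‖u‖ ^ a') := by
        filter_upwards [ae_restrict_mem measurableSet_ball, ae_restrict_of_ae hz0] with u hu hu0
        have hun : 0 < ‖u‖ := norm_pos_iff.2 hu0
        have hu1 : ‖u‖ < 1 := mem_ball_zero_iff.1 hu
        apply ENNReal.ofReal_le_ofReal
        have h1 : |φ (z + u) - φ z| ≤ (L:ℝ) * ‖u‖ := by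
          have h2 := hlip.dist_le_mul (z + u) z
          rwa [Real.dist_eq, dist_eq_norm, add_sub_cancel_left] at h2
        calc |φ (z + u) - φ z| ^ p / ‖u‖ ^ q ≤ ((L:ℝ) * ‖u‖) ^ p / ‖u‖ ^ q := by
              gcongr
          _ = (L:ℝ)^p * ‖u‖ ^ a := by
              rw [Real.mul_rpow L.coe_nonneg (norm_nonneg _), mul_div_assoc,
                ← Real.rpow_sub hun]
          _ ≤ (L:ℝ)^p * ‖u‖ ^ a' :=
              mul_le_mul_of_nonneg_left
                (Real.rpow_le_rpow_of_exponent_ge hun hu1.le ha'a) (by positivity)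
      calc ∫⁻ u in ball (0 : Eu n) 1, ENNReal.ofReal (|φ (z + u) - φ z| ^ p / ‖u‖ ^ q)
          ≤ ∫⁻ u in ball (0 : Eu n) 1, ENNReal.ofReal ((L:ℝ)^p * ‖u‖ ^ a') :=
            lintegral_mono_ae hptwise
        _ = ENNReal.ofReal ((L:ℝ)^p) * IA := by
            simp_rw [ENNReal.ofReal_mul (by positivity : (0:ℝ) ≤ (L:ℝ)^p)]
            exact lintegral_const_mul' _ _ ENNReal.ofReal_ne_top
    · -- complement part
      have hptwise : ∀ u ∈ (ball (0 : Eu n) 1)ᶜ,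
          ENNReal.ofReal (|φ (z + u) - φ z| ^ p / ‖u‖ ^ q)
            ≤ ENNReal.ofReal (((2*M)^p * 2^q) * (1 + ‖u‖) ^ (-q)) := by
        intro u hu
        have hu1 : (1:ℝ) ≤ ‖u‖ := by
          have := mem_ball_zero_iff.not.1 hu
          linarith [not_lt.1 this]
        have hun : (0:ℝ) < ‖u‖ := lt_of_lt_of_le one_pos hu1
        apply ENNReal.ofReal_le_ofReal
        have h1 : |φ (z + u) - φ z| ≤ 2 * M := by
          calc |φ (z + u) - φ z| ≤ |φ (z + u)| + |φ z| := abs_sub _ _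
            _ ≤ 2 * M := by linarith [hbd (z + u), hbd z]
        have h5 : ((1:ℝ) + ‖u‖) ^ q ≤ 2^q * ‖u‖ ^ q := by
          rw [← Real.mul_rpow (by norm_num) (norm_nonneg _)]
          exact Real.rpow_le_rpow (by positivity) (by linarith) hq0.le
        have h6 : (0:ℝ) < ((1:ℝ) + ‖u‖) ^ q := Real.rpow_pos_of_pos (by linarith) _
        have h7 : (0:ℝ) < ‖u‖ ^ q := Real.rpow_pos_of_pos hun _
        calc |φ (z + u) - φ z| ^ p / ‖u‖ ^ q ≤ (2*M) ^ p / ‖u‖ ^ q := by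
              gcongr
          _ ≤ ((2*M)^p * 2^q) * (1 + ‖u‖) ^ (-q) := by
              rw [Real.rpow_neg (by linarith), ← div_eq_mul_inv, div_le_div_iff₀ h7 h6]
              have h8 : (0:ℝ) ≤ (2*M)^p := by positivity
              nlinarith [mul_le_mul_of_nonneg_left h5 h8]
      calc ∫⁻ u in (ball (0 : Eu n) 1)ᶜ, ENNReal.ofReal (|φ (z + u) - φ z| ^ p / ‖u‖ ^ q)
          ≤ ∫⁻ u in (ball (0 : Eu n) 1)ᶜ,
              ENNReal.ofReal (((2*M)^p * 2^q) * (1 + ‖u‖) ^ (-q)) :=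
            setLIntegral_mono' measurableSet_ball.compl hptwise
        _ ≤ ∫⁻ u : Eu n, ENNReal.ofReal (((2*M)^p * 2^q) * (1 + ‖u‖) ^ (-q)) :=
            setLIntegral_le_lintegral _ _
        _ = ENNReal.ofReal ((2*M)^p * 2^q) * IB := by
            simp_rw [ENNReal.ofReal_mul (by positivity : (0:ℝ) ≤ (2*M)^p * 2^q)]
            exact lintegral_const_mul' _ _ ENNReal.ofReal_ne_top
  refine le_trans main ?_
  conv_lhs => rw [← ENNReal.ofReal_toReal h𝒞.ne]
  exact ENNReal.ofReal_le_ofReal (by linarith)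


lemma D_far (n : ℕ) (s p : ℝ) (hn : 0 < n) (hs : 0 < s) (hp : 1 ≤ p)
    (φ : Eu n → ℝ) (M : ℝ) (hbd : ∀ x, |φ x| ≤ M)
    (hsupp : tsupport φ ⊆ closedBall (0 : Eu n) 1) :
    ∃ C > (0:ℝ), ∀ z : Eu n, 2 ≤ ‖z‖ →
      (∫⁻ u, ENNReal.ofReal (|φ (z + u) - φ z| ^ p / ‖u‖ ^ ((n:ℝ) + s * p)))
        ≤ ENNReal.ofReal (C * ‖z‖ ^ (-((n:ℝ) + s * p))) := by
  have hp0 : 0 < p := lt_of_lt_of_le one_pos hp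
  set q : ℝ := (n:ℝ) + s * p with hqdef
  have hq0 : 0 < q := by positivity
  have hM0 : 0 ≤ M := le_trans (abs_nonneg _) (hbd 0)
  set K : ℝ := (volume (closedBall (0 : Eu n) 1)).toReal with hKdef
  have hK0 : 0 ≤ K := ENNReal.toReal_nonneg
  refine ⟨(M+1)^p * 2^q * (K+1), by positivity, fun z hz => ?_⟩
  have hφz : φ z = 0 := by
    apply image_eq_zero_of_notMem_tsupport
    intro hmem
    have := mem_closedBall_zero_iff.1 (hsupp hmem)
    linarith
  have hpt : ∀ u : Eu n, ENNReal.ofReal (|φ (z + u) - φ z| ^ p / ‖u‖ ^ q)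
      ≤ (closedBall (-z) 1).indicator
          (fun _ => ENNReal.ofReal (M^p * (‖z‖/2) ^ (-q))) u := by
    intro u
    by_cases hu : ‖z + u‖ ≤ 1
    · have humem : u ∈ closedBall (-z) 1 := by
        rw [mem_closedBall, dist_eq_norm, sub_neg_eq_add, add_comm]
        exact hu
      rw [indicator_of_mem humem]
      apply ENNReal.ofReal_le_ofReal
      have hzu : ‖z‖/2 ≤ ‖u‖ := by
        have h1 : ‖z‖ - ‖u‖ ≤ ‖z + u‖ := by
          have := norm_sub_le (z + u) u
          rw [add_sub_cancel_right] at this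
          linarith
        linarith
      have hzpos : (0:ℝ) < ‖z‖/2 := by linarith
      have h2 : (‖z‖/2)^q ≤ ‖u‖^q := Real.rpow_le_rpow hzpos.le hzu hq0.le
      have h3 : |φ (z+u)|^p ≤ M^p := Real.rpow_le_rpow (abs_nonneg _) (hbd _) hp0.le
      rw [hφz, sub_zero, Real.rpow_neg hzpos.le, ← div_eq_mul_inv]
      exact div_le_div₀ (by positivity) h3 (Real.rpow_pos_of_pos hzpos _) h2
    · have hφzu : φ (z+u) = 0 := by
        apply image_eq_zero_of_notMem_tsupport
        intro hmem
        exact hu (mem_closedBall_zero_iff.1 (hsupp hmem))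
      rw [hφzu, hφz, sub_zero, abs_zero, Real.zero_rpow hp0.ne', zero_div]
      simp only [ENNReal.ofReal_zero]
      exact zero_le
  calc (∫⁻ u, ENNReal.ofReal (|φ (z + u) - φ z| ^ p / ‖u‖ ^ q))
      ≤ ∫⁻ u, (closedBall (-z) 1).indicator
          (fun _ => ENNReal.ofReal (M^p * (‖z‖/2) ^ (-q))) u := lintegral_mono hpt
    _ = ENNReal.ofReal (M^p * (‖z‖/2) ^ (-q)) * volume (closedBall (-z) 1) := by
        rw [lintegral_indicator measurableSet_closedBall, setLIntegral_const]
    _ = ENNReal.ofReal (M^p * (‖z‖/2) ^ (-q)) * volume (closedBall (0:Eu n) 1) := by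
        rw [Measure.addHaar_closedBall_center]
    _ ≤ ENNReal.ofReal ((M+1)^p * 2^q * (K+1) * ‖z‖ ^ (-q)) := by
        rw [show volume (closedBall (0:Eu n) 1) = ENNReal.ofReal K from
          (ENNReal.ofReal_toReal measure_closedBall_lt_top.ne).symm,
          ← ENNReal.ofReal_mul (by positivity)]
        apply ENNReal.ofReal_le_ofReal
        have hsplit : (‖z‖/2:ℝ) ^ (-q) = 2^q * ‖z‖ ^ (-q) := by
          rw [Real.div_rpow (norm_nonneg z) (by norm_num),
            Real.rpow_neg (by norm_num : (0:ℝ) ≤ 2), div_eq_mul_inv, inv_inv, mul_comm]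
        rw [hsplit]
        have hM : M^p ≤ (M+1)^p := Real.rpow_le_rpow hM0 (by linarith) hp0.le
        have hXY : M^p * K ≤ (M+1)^p * (K+1) :=
          mul_le_mul hM (by linarith) hK0 (by positivity)
        calc M^p * (2^q * ‖z‖^(-q)) * K = (M^p * K) * (2^q * ‖z‖^(-q)) := by ring
          _ ≤ ((M+1)^p * (K+1)) * (2^q * ‖z‖^(-q)) := by
              apply mul_le_mul_of_nonneg_right hXY
              have := Real.rpow_nonneg (norm_nonneg z) (-q)
              positivity
          _ = (M+1)^p * 2^q * (K+1) * ‖z‖^(-q) := by ring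


lemma Dsp_rescale (n : ℕ) (s p : ℝ) (φ : Eu n → ℝ)
    {r : ℝ} (hr : 0 < r) (x₀ x : Eu n) :
    Dsp n s p (fun y => φ (r⁻¹ • (y - x₀))) x
      = ENNReal.ofReal (r ^ (-(s*p))) *
        ∫⁻ u, ENNReal.ofReal (|φ (r⁻¹ • (x - x₀) + u) - φ (r⁻¹ • (x - x₀))| ^ p
          / ‖u‖ ^ ((n:ℝ) + s * p)) := by
  set q : ℝ := (n:ℝ) + s * p with hqdef
  set z : Eu n := r⁻¹ • (x - x₀) with hzdef
  simp only [Dsp]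
  rw [lintegral_scale n _ hr]
  have hptw : ∀ u : Eu n,
      ENNReal.ofReal (|φ (r⁻¹ • (x + r • u - x₀)) - φ (r⁻¹ • (x - x₀))| ^ p / ‖r • u‖ ^ q)
        = ENNReal.ofReal (r ^ (-q)) *
          ENNReal.ofReal (|φ (z + u) - φ z| ^ p / ‖u‖ ^ q) := by
    intro u
    have harg : r⁻¹ • (x + r • u - x₀) = z + u := by
      rw [show x + r • u - x₀ = (x - x₀) + r • u by abel, smul_add, smul_smul,
        inv_mul_cancel₀ hr.ne', one_smul]
    have hnrm : ‖r • u‖ ^ q = r ^ q * ‖u‖ ^ q := by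
      rw [norm_smul, Real.norm_eq_abs, abs_of_pos hr, Real.mul_rpow hr.le (norm_nonneg _)]
    rw [harg, hnrm, ← ENNReal.ofReal_mul (Real.rpow_nonneg hr.le _)]
    congr 1
    rw [Real.rpow_neg hr.le, inv_mul_eq_div, div_div, mul_comm (‖u‖ ^ q) (r ^ q)]
  simp_rw [← hqdef, hptw]
  rw [lintegral_const_mul' _ _ ENNReal.ofReal_ne_top, ← mul_assoc,
    ← ENNReal.ofReal_mul (pow_nonneg hr.le n)]
  congr 2
  rw [← Real.rpow_natCast r n, ← Real.rpow_add hr]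
  congr 1
  push_cast
  ring

end Helpers

/-- decay of the fractional gradient of the rescaled function
`φ_{r,x₀}(x) = φ((x-x₀)/r)`:
`|D^s φ_{r,x₀}(x)|^p ≤ C min{r^{-sp}, r^n |x-x₀|^{-(n+sp)}}` with `C` independent of `r, x₀`. -/
theorem decay_fractional_gradient_rescaled (n : ℕ) (s p : ℝ) (hn : 0 < n)
    (hs : 0 < s) (hs1 : s < 1) (hp : 1 ≤ p) (hspn : s * p < n)
    (φ : Eu n → ℝ) (L : NNReal) (hlip : LipschitzWith L φ)
    (M : ℝ) (hbd : ∀ x, |φ x| ≤ M)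
    (hsupp : tsupport φ ⊆ closedBall (0 : Eu n) 1) :
    ∃ C > (0 : ℝ), ∀ r : ℝ, 0 < r → ∀ x₀ x : Eu n,
      Dsp n s p (fun y => φ (r⁻¹ • (y - x₀))) x ≤
        ENNReal.ofReal C *
          min (ENNReal.ofReal (r ^ (-(s * p))))
            (ENNReal.ofReal (r ^ (n : ℝ)) * ENNReal.ofReal ‖x - x₀‖ ^ (-((n : ℝ) + s * p))) := by
  have hp0 : 0 < p := lt_of_lt_of_le one_pos hp
  have hsp : 0 < s * p := mul_pos hs hp0
  set q : ℝ := (n:ℝ) + s * p with hqdef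
  have hq0 : 0 < q := by positivity
  obtain ⟨C₁, hC₁, hU⟩ := D_unif n s p hn hs hs1 hp φ L hlip M hbd
  obtain ⟨C₂, hC₂, hFr⟩ := D_far n s p hn hs hp φ M hbd hsupp
  have h2q : (0:ℝ) < 2 ^ q := Real.rpow_pos_of_pos two_pos q
  set C : ℝ := C₁ * (1 + 2 ^ q) + C₂ with hCdef
  have hCpos : 0 < C := by positivity
  have hC₁C : C₁ ≤ C := by nlinarith
  have hC₂C : C₂ ≤ C := by nlinarith
  refine ⟨C, hCpos, fun r hr x₀ x => ?_⟩
  rw [Dsp_rescale n s p φ hr x₀ x]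
  set z : Eu n := r⁻¹ • (x - x₀) with hzdef
  set d : ℝ := ‖x - x₀‖ with hddef
  have hd0 : 0 ≤ d := norm_nonneg _
  set D : ℝ≥0∞ := ∫⁻ u, ENNReal.ofReal (|φ (z + u) - φ z| ^ p / ‖u‖ ^ q) with hDdef
  have hzn : ‖z‖ = d / r := by
    rw [hzdef, norm_smul, norm_inv, Real.norm_eq_abs, abs_of_pos hr, inv_mul_eq_div, hddef]
  -- bound 1
  have hB1 : ENNReal.ofReal (r ^ (-(s*p))) * D
      ≤ ENNReal.ofReal C * ENNReal.ofReal (r ^ (-(s * p))) := by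
    calc ENNReal.ofReal (r ^ (-(s*p))) * D
        ≤ ENNReal.ofReal (r ^ (-(s*p))) * ENNReal.ofReal C₁ := mul_le_mul_right (hU z) _
      _ = ENNReal.ofReal C₁ * ENNReal.ofReal (r ^ (-(s*p))) := mul_comm _ _
      _ ≤ ENNReal.ofReal C * ENNReal.ofReal (r ^ (-(s*p))) :=
          mul_le_mul_left (ENNReal.ofReal_le_ofReal hC₁C) _
  -- bound 2
  have hB2 : ENNReal.ofReal (r ^ (-(s*p))) * D
      ≤ ENNReal.ofReal C *
        (ENNReal.ofReal (r ^ (n : ℝ)) * ENNReal.ofReal d ^ (-q)) := by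
    rcases eq_or_lt_of_le hd0 with hdz | hdpos
    · rw [← hdz, ENNReal.ofReal_zero, ENNReal.zero_rpow_of_neg (by linarith : -q < 0),
        ENNReal.mul_top (ENNReal.ofReal_pos.2 (Real.rpow_pos_of_pos hr _)).ne',
        ENNReal.mul_top (ENNReal.ofReal_pos.2 hCpos).ne']
      exact le_top
    · have hrpw : ENNReal.ofReal d ^ (-q) = ENNReal.ofReal (d ^ (-q)) :=
        ENNReal.ofReal_rpow_of_pos hdpos
      rw [hrpw, ← ENNReal.ofReal_mul (Real.rpow_nonneg hr.le _),
        ← ENNReal.ofReal_mul hCpos.le]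
      by_cases hcase : d ≤ 2 * r
      · -- near regime: use the uniform bound
        have k1 : ((2*r:ℝ)) ^ (-q) ≤ d ^ (-q) :=
          Real.rpow_le_rpow_of_nonpos hdpos hcase (neg_nonpos.2 hq0.le)
        have k2 : ((2*r:ℝ)) ^ (-q) = 2 ^ (-q) * r ^ (-q) :=
          Real.mul_rpow (by norm_num) hr.le
        have k3 : r ^ ((n:ℝ)) * r ^ (-q) = r ^ (-(s*p)) := by
          rw [← Real.rpow_add hr]; congr 1; rw [hqdef]; ring
        have k4 : (2:ℝ) ^ q * 2 ^ (-q) = 1 := by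
          rw [← Real.rpow_add two_pos, add_neg_cancel, Real.rpow_zero]
        have k5 : (0:ℝ) ≤ r ^ ((n:ℝ)) := Real.rpow_nonneg hr.le _
        have key : r ^ (-(s*p)) = 2 ^ q * (r ^ ((n:ℝ)) * (2 ^ (-q) * r ^ (-q))) := by
          rw [show r ^ ((n:ℝ)) * (2 ^ (-q) * r ^ (-q))
              = 2 ^ (-q) * (r ^ ((n:ℝ)) * r ^ (-q)) by ring, k3, ← mul_assoc, k4, one_mul]
        have realineq : r ^ (-(s*p)) * C₁ ≤ C * (r ^ ((n:ℝ)) * d ^ (-q)) := by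
          have step1 : r ^ (-(s*p)) * C₁
              = (C₁ * 2 ^ q) * (r ^ ((n:ℝ)) * (2 ^ (-q) * r ^ (-q))) := by
            rw [key]; ring
          rw [step1]
          apply mul_le_mul (by nlinarith)
            (mul_le_mul_of_nonneg_left (k2 ▸ k1) k5) (by positivity) hCpos.le
        calc ENNReal.ofReal (r ^ (-(s*p))) * D
            ≤ ENNReal.ofReal (r ^ (-(s*p))) * ENNReal.ofReal C₁ := mul_le_mul_right (hU z) _
          _ = ENNReal.ofReal (r ^ (-(s*p)) * C₁) :=
              (ENNReal.ofReal_mul (Real.rpow_nonneg hr.le _)).symm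
          _ ≤ ENNReal.ofReal (C * (r ^ ((n:ℝ)) * d ^ (-q))) :=
              ENNReal.ofReal_le_ofReal realineq
      · -- far regime
        push_neg at hcase
        have h2z : 2 ≤ ‖z‖ := by
          rw [hzn, le_div_iff₀ hr]; linarith
        have hdr : ((d/r:ℝ)) ^ (-q) = d ^ (-q) * r ^ q := by
          rw [Real.div_rpow hd0 hr.le, Real.rpow_neg hr.le, div_eq_mul_inv, inv_inv]
        have k3' : r ^ (-(s*p)) * r ^ q = r ^ ((n:ℝ)) := by
          rw [← Real.rpow_add hr]; congr 1; rw [hqdef]; ring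
        have realineq2 : r ^ (-(s*p)) * (C₂ * (d/r) ^ (-q)) ≤ C * (r ^ ((n:ℝ)) * d ^ (-q)) := by
          rw [hdr, show r ^ (-(s*p)) * (C₂ * (d ^ (-q) * r ^ q))
            = C₂ * ((r ^ (-(s*p)) * r ^ q) * d ^ (-q)) by ring, k3']
          have : (0:ℝ) ≤ r ^ ((n:ℝ)) * d ^ (-q) := by
            have := Real.rpow_nonneg hd0 (-q)
            positivity
          nlinarith [mul_le_mul_of_nonneg_right hC₂C this]
        calc ENNReal.ofReal (r ^ (-(s*p))) * D
            ≤ ENNReal.ofReal (r ^ (-(s*p))) * ENNReal.ofReal (C₂ * ‖z‖ ^ (-q)) :=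
              mul_le_mul_right (hFr z h2z) _
          _ = ENNReal.ofReal (r ^ (-(s*p)) * (C₂ * (d/r) ^ (-q))) := by
              rw [hzn, ← ENNReal.ofReal_mul (Real.rpow_nonneg hr.le _)]
          _ ≤ ENNReal.ofReal (C * (r ^ ((n:ℝ)) * d ^ (-q))) :=
              ENNReal.ofReal_le_ofReal realineq2
  rcases min_cases (ENNReal.ofReal (r ^ (-(s * p))))
      (ENNReal.ofReal (r ^ (n : ℝ)) * ENNReal.ofReal ‖x - x₀‖ ^ (-((n:ℝ) + s * p))) with
    ⟨hmin, _⟩ | ⟨hmin, _⟩ <;> rw [hmin]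
  · exact hB1
  · exact hB2
end
end

section
/- Let u ∈ L^{p*_s}(R^n), and for ε > 0 let φ_ε(x) = φ(x/ε) where φ is Lipschitz with support in B_1(0), so that |D^s φ_ε(x)|^p ≤ C min{ε^{-sp}, ε^n |x|^{-(n+sp)}}. Then ∫_{R^n} |u|^p |D^s φ_ε|^p dx → 0 as ε → 0. -/
open MeasureTheory ENNReal Filter Metric Topology

noncomputable section

section AuxVanishing

lemma exists_dyadic {t : ℝ} (ht : 1 ≤ t) : ∃ k : ℕ, (2:ℝ)^k ≤ t ∧ t < 2^(k+1) := by
  have hex : ∃ m : ℕ, t < 2 ^ m := pow_unbounded_of_one_lt t one_lt_two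
  classical
  have hm : t < 2 ^ (Nat.find hex) := Nat.find_spec hex
  have hm0 : Nat.find hex ≠ 0 := by
    intro h; rw [h] at hm; simp at hm; linarith
  refine ⟨Nat.find hex - 1, ?_, ?_⟩
  · have := Nat.find_min hex (m := Nat.find hex - 1) (Nat.pred_lt hm0)
    push_neg at this; exact this
  · rwa [Nat.sub_add_cancel (Nat.one_le_iff_ne_zero.mpr hm0)]

/-- geometric-decay constant -/
def Ct (n : ℕ) (b : ℝ) : ℝ≥0∞ :=
  ENNReal.ofReal (2 ^ (n:ℝ)) * volume (ball (0:Eu n) 1) *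
    (1 - ENNReal.ofReal ((2:ℝ) ^ (-b)))⁻¹

lemma Ct_lt_top (n : ℕ) {b : ℝ} (hb : 0 < b) : Ct n b < ⊤ := by
  have h1 : ((2:ℝ) ^ (-b)) < 1 := by
    apply Real.rpow_lt_one_of_one_lt_of_neg one_lt_two (by linarith)
  have h2 : (1 : ℝ≥0∞) - ENNReal.ofReal ((2:ℝ) ^ (-b)) ≠ 0 := by
    rw [← pos_iff_ne_zero, tsub_pos_iff_lt]
    calc ENNReal.ofReal ((2:ℝ) ^ (-b)) < ENNReal.ofReal 1 :=
          (ENNReal.ofReal_lt_ofReal_iff one_pos).mpr h1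
      _ = 1 := ENNReal.ofReal_one
  exact ENNReal.mul_lt_top (ENNReal.mul_lt_top ENNReal.ofReal_lt_top measure_ball_lt_top)
    (ENNReal.inv_lt_top.mpr (pos_iff_ne_zero.mpr h2))

lemma real_tail_id (n : ℕ) (b r : ℝ) (hr : 0 < r) (k : ℕ) :
    ((2:ℝ)^k * r) ^ (-((n:ℝ) + b)) * ((2:ℝ)^(k+1) * r) ^ (n:ℕ)
      = r ^ (-b) * 2 ^ (n:ℝ) * ((2:ℝ) ^ (-b)) ^ k := by
  have h2k : (0:ℝ) < 2^k := by positivity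
  have h2k1 : (0:ℝ) < 2^(k+1) := by positivity
  rw [Real.mul_rpow h2k.le hr.le, ← Real.rpow_natCast ((2:ℝ)^(k+1) * r) n,
    Real.mul_rpow h2k1.le hr.le,
    ← Real.rpow_natCast (2:ℝ) k, ← Real.rpow_natCast (2:ℝ) (k+1),
    ← Real.rpow_mul (by norm_num : (0:ℝ) ≤ 2), ← Real.rpow_mul (by norm_num : (0:ℝ) ≤ 2),
    ← Real.rpow_natCast ((2:ℝ) ^ (-b)) k, ← Real.rpow_mul (by norm_num : (0:ℝ) ≤ 2)]
  rw [mul_mul_mul_comm, ← Real.rpow_add two_pos, ← Real.rpow_add hr]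
  have e1 : ((k:ℝ) * -((n:ℝ) + b) + ((k:ℝ)+1) * (n:ℝ)) = (n:ℝ) + (-b * k) := by ring
  have e2 : (-((n:ℝ) + b) + (n:ℝ)) = -b := by ring
  push_cast
  rw [e1, e2, Real.rpow_add two_pos]
  ring

lemma tail_lintegral (n : ℕ) {b r : ℝ} (hb : 0 < b) (hr : 0 < r) :
    ∫⁻ h in (closedBall (0:Eu n) r)ᶜ, ENNReal.ofReal (‖h‖ ^ (-((n:ℝ) + b)))
      ≤ ENNReal.ofReal (r ^ (-b)) * Ct n b := by
  set B : ℝ≥0∞ := volume (ball (0:Eu n) 1) with hB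
  set A : ℕ → Set (Eu n) := fun k => {h | (2:ℝ)^k * r ≤ ‖h‖ ∧ ‖h‖ < 2^(k+1) * r} with hA
  have hAm : ∀ k, MeasurableSet (A k) := by
    intro k
    have : A k = (fun h : Eu n => ‖h‖) ⁻¹' (Set.Ico ((2:ℝ)^k * r) (2^(k+1) * r)) := rfl
    rw [this]
    exact measurable_norm measurableSet_Ico
  have hcover : (closedBall (0:Eu n) r)ᶜ ⊆ ⋃ k, A k := by
    intro h hh
    have hrh : r < ‖h‖ := by
      simpa [mem_closedBall, dist_zero_right, not_le] using hh
    obtain ⟨k, hk1, hk2⟩ := exists_dyadic (t := ‖h‖ / r)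
      ((le_div_iff₀ hr).2 (by linarith))
    exact Set.mem_iUnion.mpr ⟨k, (le_div_iff₀ hr).1 hk1, (div_lt_iff₀ hr).1 hk2⟩
  have step1 : ∀ k, ∫⁻ h in A k, ENNReal.ofReal (‖h‖ ^ (-((n:ℝ) + b)))
      ≤ ENNReal.ofReal (r ^ (-b) * 2 ^ (n:ℝ) * ((2:ℝ) ^ (-b)) ^ k) * B := by
    intro k
    have hpos : (0:ℝ) < 2^k * r := by positivity
    have hle : ∫⁻ h in A k, ENNReal.ofReal (‖h‖ ^ (-((n:ℝ) + b)))
        ≤ ∫⁻ _ in A k, ENNReal.ofReal (((2:ℝ)^k * r) ^ (-((n:ℝ) + b))) := by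
      apply setLIntegral_mono measurable_const
      intro x hx
      exact ENNReal.ofReal_le_ofReal
        (Real.rpow_le_rpow_of_nonpos hpos hx.1 (neg_nonpos.mpr (by positivity)))
    refine hle.trans ?_
    rw [setLIntegral_const]
    have hvol : volume (A k) ≤ ENNReal.ofReal (((2:ℝ)^(k+1) * r) ^ (n:ℕ)) * B := by
      have hsub : A k ⊆ closedBall (0:Eu n) ((2:ℝ)^(k+1) * r) := by
        intro h hh
        simpa [mem_closedBall, dist_zero_right] using hh.2.le
      calc volume (A k) ≤ volume (closedBall (0:Eu n) ((2:ℝ)^(k+1) * r)) :=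
            measure_mono hsub
        _ = ENNReal.ofReal (((2:ℝ)^(k+1) * r) ^ (n:ℕ)) * B := by
            rw [Measure.addHaar_closedBall _ _ (by positivity), finrank_euclideanSpace_fin]
    calc ENNReal.ofReal (((2:ℝ)^k * r) ^ (-((n:ℝ) + b))) * volume (A k)
        ≤ ENNReal.ofReal (((2:ℝ)^k * r) ^ (-((n:ℝ) + b))) *
          (ENNReal.ofReal (((2:ℝ)^(k+1) * r) ^ (n:ℕ)) * B) := mul_le_mul_right hvol _
      _ = ENNReal.ofReal (r ^ (-b) * 2 ^ (n:ℝ) * ((2:ℝ) ^ (-b)) ^ k) * B := by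
          rw [← mul_assoc, ← ENNReal.ofReal_mul (by positivity), real_tail_id n b r hr k]
  calc ∫⁻ h in (closedBall (0:Eu n) r)ᶜ, ENNReal.ofReal (‖h‖ ^ (-((n:ℝ) + b)))
      ≤ ∫⁻ h in ⋃ k, A k, ENNReal.ofReal (‖h‖ ^ (-((n:ℝ) + b))) :=
        lintegral_mono_set hcover
    _ ≤ ∑' k, ∫⁻ h in A k, ENNReal.ofReal (‖h‖ ^ (-((n:ℝ) + b))) :=
        lintegral_iUnion_le _ _
    _ ≤ ∑' k, ENNReal.ofReal (r ^ (-b) * 2 ^ (n:ℝ) * ((2:ℝ) ^ (-b)) ^ k) * B :=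
        ENNReal.tsum_le_tsum step1
    _ = ENNReal.ofReal (r ^ (-b)) * Ct n b := by
        have h1 : ∀ k : ℕ, ENNReal.ofReal (r ^ (-b) * 2 ^ (n:ℝ) * ((2:ℝ) ^ (-b)) ^ k) * B
            = (ENNReal.ofReal (r ^ (-b)) * (ENNReal.ofReal (2 ^ (n:ℝ)) * B)) *
              (ENNReal.ofReal ((2:ℝ) ^ (-b))) ^ k := by
          intro k
          rw [ENNReal.ofReal_mul (by positivity), ENNReal.ofReal_mul (by positivity),
            ENNReal.ofReal_pow (by positivity)]
          ring
        simp_rw [h1]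
        rw [ENNReal.tsum_mul_left, ENNReal.tsum_geometric, Ct]
        ring

lemma real_ball_id (n : ℕ) (a r : ℝ) (hr : 0 < r) (k : ℕ) :
    (r / 2^k) ^ a * (r / 2^(k+1)) ^ (-(n:ℝ)) * (r / 2^k) ^ (n:ℕ)
      = r ^ a * 2 ^ (n:ℝ) * ((2:ℝ) ^ (-a)) ^ k := by
  have e1 : ∀ m : ℕ, r / 2^m = r * (2:ℝ) ^ (-(m:ℝ)) := by
    intro m
    rw [Real.rpow_neg (by norm_num), Real.rpow_natCast]
    ring
  rw [e1 k, e1 (k+1)]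
  rw [Real.mul_rpow hr.le (by positivity), Real.mul_rpow hr.le (by positivity),
    ← Real.rpow_natCast (r * (2:ℝ) ^ (-((k:ℝ)))) n,
    Real.mul_rpow hr.le (by positivity),
    ← Real.rpow_mul (by norm_num : (0:ℝ) ≤ 2), ← Real.rpow_mul (by norm_num : (0:ℝ) ≤ 2),
    ← Real.rpow_mul (by norm_num : (0:ℝ) ≤ 2),
    ← Real.rpow_natCast ((2:ℝ) ^ (-a)) k, ← Real.rpow_mul (by norm_num : (0:ℝ) ≤ 2)]
  have e2 : r ^ a * 2 ^ (-(k:ℝ) * a) * (r ^ (-(n:ℝ)) * 2 ^ (-((k:ℝ)+1) * -(n:ℝ))) *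
      (r ^ (n:ℝ) * 2 ^ (-(k:ℝ) * (n:ℝ)))
      = r ^ a * (r ^ (-(n:ℝ)) * r ^ (n:ℝ)) *
        (2 ^ (-(k:ℝ) * a) * (2 ^ (-((k:ℝ)+1) * -(n:ℝ)) * 2 ^ (-(k:ℝ) * (n:ℝ)))) := by ring
  push_cast
  rw [e2, ← Real.rpow_add hr, ← Real.rpow_add two_pos, ← Real.rpow_add two_pos]
  have e3 : (-(n:ℝ) + (n:ℝ)) = 0 := by ring
  have e4 : (-(k:ℝ) * a + (-((k:ℝ)+1) * -(n:ℝ) + -(k:ℝ) * (n:ℝ))) = (n:ℝ) + (-a * k) := by ring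
  rw [e3, e4, Real.rpow_zero, Real.rpow_add two_pos]
  ring

lemma ball_lintegral (n : ℕ) (hn : 0 < n) {a r : ℝ} (ha : 0 < a) (hr : 0 < r) :
    ∫⁻ h in closedBall (0:Eu n) r, ENNReal.ofReal (‖h‖ ^ (a - (n:ℝ)))
      ≤ ENNReal.ofReal (r ^ a) * Ct n a := by
  haveI : Nonempty (Fin n) := Fin.pos_iff_nonempty.mp hn
  haveI : Nontrivial (Eu n) := inferInstance
  set B : ℝ≥0∞ := volume (ball (0:Eu n) 1) with hB
  set A : ℕ → Set (Eu n) := fun k => {h | r / 2^(k+1) < ‖h‖ ∧ ‖h‖ ≤ r / 2^k} with hA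
  have hzero : ∫⁻ h in closedBall (0:Eu n) r, ENNReal.ofReal (‖h‖ ^ (a - (n:ℝ)))
      = ∫⁻ h in closedBall (0:Eu n) r \ {0}, ENNReal.ofReal (‖h‖ ^ (a - (n:ℝ))) := by
    apply (setLIntegral_congr _).symm
    exact MeasureTheory.diff_ae_eq_self.mpr (measure_mono_null Set.inter_subset_right
      (measure_singleton 0))
  have hcover : closedBall (0:Eu n) r \ {0} ⊆ ⋃ k, A k := by
    intro h hh
    have hh1 : ‖h‖ ≤ r := by simpa [mem_closedBall, dist_zero_right] using hh.1
    have hh0 : 0 < ‖h‖ := by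
      rcases hh with ⟨_, h0⟩
      simp only [Set.mem_singleton_iff] at h0
      exact norm_pos_iff.mpr h0
    obtain ⟨k, hk1, hk2⟩ := exists_dyadic (t := r / ‖h‖)
      ((le_div_iff₀ hh0).2 (by linarith))
    refine Set.mem_iUnion.mpr ⟨k, ?_, ?_⟩
    · rw [div_lt_iff₀ (by positivity)]
      rw [div_lt_iff₀ hh0] at hk2
      linarith
    · rw [le_div_iff₀ (by positivity)]
      rw [le_div_iff₀ hh0] at hk1
      linarith
  have step1 : ∀ k, ∫⁻ h in A k, ENNReal.ofReal (‖h‖ ^ (a - (n:ℝ)))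
      ≤ ENNReal.ofReal (r ^ a * 2 ^ (n:ℝ) * ((2:ℝ) ^ (-a)) ^ k) * B := by
    intro k
    have hp1 : (0:ℝ) < r / 2^(k+1) := by positivity
    have hp0 : (0:ℝ) < r / 2^k := by positivity
    have hle : ∫⁻ h in A k, ENNReal.ofReal (‖h‖ ^ (a - (n:ℝ)))
        ≤ ∫⁻ _ in A k, ENNReal.ofReal ((r / 2^k) ^ a * (r / 2^(k+1)) ^ (-(n:ℝ))) := by
      apply setLIntegral_mono measurable_const
      intro x hx
      apply ENNReal.ofReal_le_ofReal
      have hx0 : 0 < ‖x‖ := lt_trans hp1 hx.1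
      have : ‖x‖ ^ (a - (n:ℝ)) = ‖x‖ ^ a * ‖x‖ ^ (-(n:ℝ)) := by
        rw [← Real.rpow_add hx0]; ring_nf
      rw [this]
      apply mul_le_mul
      · exact Real.rpow_le_rpow hx0.le hx.2 ha.le
      · exact Real.rpow_le_rpow_of_nonpos hp1 hx.1.le (neg_nonpos.mpr (by positivity))
      · positivity
      · positivity
    refine hle.trans ?_
    rw [setLIntegral_const]
    have hvol : volume (A k) ≤ ENNReal.ofReal ((r / 2^k) ^ (n:ℕ)) * B := by
      have hsub : A k ⊆ closedBall (0:Eu n) (r / 2^k) := by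
        intro h hh
        simpa [mem_closedBall, dist_zero_right] using hh.2
      calc volume (A k) ≤ volume (closedBall (0:Eu n) (r / 2^k)) := measure_mono hsub
        _ = ENNReal.ofReal ((r / 2^k) ^ (n:ℕ)) * B := by
            rw [Measure.addHaar_closedBall _ _ hp0.le, finrank_euclideanSpace_fin]
    calc ENNReal.ofReal ((r / 2^k) ^ a * (r / 2^(k+1)) ^ (-(n:ℝ))) * volume (A k)
        ≤ ENNReal.ofReal ((r / 2^k) ^ a * (r / 2^(k+1)) ^ (-(n:ℝ))) *
          (ENNReal.ofReal ((r / 2^k) ^ (n:ℕ)) * B) := mul_le_mul_right hvol _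
      _ = ENNReal.ofReal (r ^ a * 2 ^ (n:ℝ) * ((2:ℝ) ^ (-a)) ^ k) * B := by
          rw [← mul_assoc, ← ENNReal.ofReal_mul (by positivity), real_ball_id n a r hr k]
  rw [hzero]
  calc ∫⁻ h in closedBall (0:Eu n) r \ {0}, ENNReal.ofReal (‖h‖ ^ (a - (n:ℝ)))
      ≤ ∫⁻ h in ⋃ k, A k, ENNReal.ofReal (‖h‖ ^ (a - (n:ℝ))) := lintegral_mono_set hcover
    _ ≤ ∑' k, ∫⁻ h in A k, ENNReal.ofReal (‖h‖ ^ (a - (n:ℝ))) := lintegral_iUnion_le _ _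
    _ ≤ ∑' k, ENNReal.ofReal (r ^ a * 2 ^ (n:ℝ) * ((2:ℝ) ^ (-a)) ^ k) * B :=
        ENNReal.tsum_le_tsum step1
    _ = ENNReal.ofReal (r ^ a) * Ct n a := by
        have h1 : ∀ k : ℕ, ENNReal.ofReal (r ^ a * 2 ^ (n:ℝ) * ((2:ℝ) ^ (-a)) ^ k) * B
            = (ENNReal.ofReal (r ^ a) * (ENNReal.ofReal (2 ^ (n:ℝ)) * B)) *
              (ENNReal.ofReal ((2:ℝ) ^ (-a))) ^ k := by
          intro k
          rw [ENNReal.ofReal_mul (by positivity), ENNReal.ofReal_mul (by positivity),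
            ENNReal.ofReal_pow (by positivity)]
          ring
        simp_rw [h1]
        rw [ENNReal.tsum_mul_left, ENNReal.tsum_geometric, Ct]
        ring

section Bounds
variable (n : ℕ) (s p : ℝ) (φ : Eu n → ℝ) (L : NNReal) (M : ℝ)

/-- uniform (near-field) constant -/
def K1 : ℝ≥0∞ :=
  ENNReal.ofReal ((L:ℝ)^p) * Ct n (p - s*p) + ENNReal.ofReal ((2*M)^p) * Ct n (s*p)

/-- far-field constant -/
def K2 : ℝ≥0∞ := ENNReal.ofReal (M^p * 2^((n:ℝ)+s*p)) * volume (ball (0:Eu n) 1)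

variable {n s p φ L M}

lemma bound1 (hn : 0 < n) (hs : 0 < s) (hs1 : s < 1) (hp : 1 < p) (hspn : s * p < n)
    (hlip : LipschitzWith L φ) (hbd : ∀ x, |φ x| ≤ M)
    {ε : ℝ} (hε : 0 < ε) (x : Eu n) :
    Dsp n s p (fun y => φ (ε⁻¹ • y)) x ≤ ENNReal.ofReal (ε ^ (-(s*p))) * K1 n s p L M := by
  have hM : 0 ≤ M := le_trans (abs_nonneg _) (hbd 0)
  have hp0 : (0:ℝ) < p := by linarith
  have hsp : 0 < s * p := by positivity
  have hpsp : 0 < p - s * p := by nlinarith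
  rw [Dsp, ← lintegral_add_compl _ (measurableSet_closedBall (x := (0:Eu n)) (ε := ε))]
  have near : ∫⁻ h in closedBall (0:Eu n) ε,
      ENNReal.ofReal (|φ (ε⁻¹ • (x + h)) - φ (ε⁻¹ • x)| ^ p / ‖h‖ ^ ((n : ℝ) + s * p))
      ≤ ENNReal.ofReal ((L:ℝ)^p * ε^(-p)) *
        (ENNReal.ofReal (ε ^ (p - s*p)) * Ct n (p - s*p)) := by
    have hpt : ∀ h : Eu n,
        ENNReal.ofReal (|φ (ε⁻¹ • (x + h)) - φ (ε⁻¹ • x)| ^ p / ‖h‖ ^ ((n : ℝ) + s * p))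
        ≤ ENNReal.ofReal ((L:ℝ)^p * ε^(-p)) * ENNReal.ofReal (‖h‖ ^ ((p - s*p) - (n:ℝ))) := by
      intro h
      rcases eq_or_ne h 0 with rfl | hh0
      · simp [Real.zero_rpow hp0.ne']
      have hhn : (0:ℝ) < ‖h‖ := norm_pos_iff.mpr hh0
      rw [← ENNReal.ofReal_mul (by positivity)]
      apply ENNReal.ofReal_le_ofReal
      have hdist : |φ (ε⁻¹ • (x + h)) - φ (ε⁻¹ • x)| ≤ (L:ℝ) * (ε⁻¹ * ‖h‖) := by
        have := hlip.dist_le_mul (ε⁻¹ • (x + h)) (ε⁻¹ • x)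
        rw [Real.dist_eq] at this
        refine this.trans ?_
        rw [dist_eq_norm, ← smul_sub, add_sub_cancel_left, norm_smul, norm_inv,
          Real.norm_eq_abs, abs_of_pos hε]
      have hnum : |φ (ε⁻¹ • (x + h)) - φ (ε⁻¹ • x)| ^ p ≤ (L:ℝ)^p * ε^(-p) * ‖h‖^p := by
        calc |φ (ε⁻¹ • (x + h)) - φ (ε⁻¹ • x)| ^ p ≤ ((L:ℝ) * (ε⁻¹ * ‖h‖)) ^ p :=
              Real.rpow_le_rpow (abs_nonneg _) hdist hp0.le
          _ = (L:ℝ)^p * ε^(-p) * ‖h‖^p := by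
              rw [Real.mul_rpow (by positivity) (by positivity),
                Real.mul_rpow (by positivity) (by positivity),
                Real.inv_rpow hε.le, ← Real.rpow_neg hε.le]
              ring
      calc |φ (ε⁻¹ • (x + h)) - φ (ε⁻¹ • x)| ^ p / ‖h‖ ^ ((n : ℝ) + s * p)
          ≤ ((L:ℝ)^p * ε^(-p) * ‖h‖^p) / ‖h‖ ^ ((n : ℝ) + s * p) :=
            div_le_div_of_nonneg_right hnum (Real.rpow_pos_of_pos hhn _).le
        _ = (L:ℝ)^p * ε^(-p) * ‖h‖ ^ ((p - s*p) - (n:ℝ)) := by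
            rw [mul_div_assoc]
            congr 1
            rw [← Real.rpow_sub hhn]
            ring_nf
    calc ∫⁻ h in closedBall (0:Eu n) ε,
        ENNReal.ofReal (|φ (ε⁻¹ • (x + h)) - φ (ε⁻¹ • x)| ^ p / ‖h‖ ^ ((n : ℝ) + s * p))
        ≤ ∫⁻ h in closedBall (0:Eu n) ε,
          ENNReal.ofReal ((L:ℝ)^p * ε^(-p)) * ENNReal.ofReal (‖h‖ ^ ((p - s*p) - (n:ℝ))) :=
          lintegral_mono fun h => hpt h
      _ = ENNReal.ofReal ((L:ℝ)^p * ε^(-p)) *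
          ∫⁻ h in closedBall (0:Eu n) ε, ENNReal.ofReal (‖h‖ ^ ((p - s*p) - (n:ℝ))) := by
          rw [lintegral_const_mul]
          exact (measurable_norm.pow measurable_const).ennreal_ofReal
      _ ≤ _ := mul_le_mul_right (ball_lintegral n hn hpsp hε) _
  have far : ∫⁻ h in (closedBall (0:Eu n) ε)ᶜ,
      ENNReal.ofReal (|φ (ε⁻¹ • (x + h)) - φ (ε⁻¹ • x)| ^ p / ‖h‖ ^ ((n : ℝ) + s * p))
      ≤ ENNReal.ofReal ((2*M)^p) * (ENNReal.ofReal (ε ^ (-(s*p))) * Ct n (s*p)) := by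
    have hpt : ∀ h : Eu n, h ∈ (closedBall (0:Eu n) ε)ᶜ →
        ENNReal.ofReal (|φ (ε⁻¹ • (x + h)) - φ (ε⁻¹ • x)| ^ p / ‖h‖ ^ ((n : ℝ) + s * p))
        ≤ ENNReal.ofReal ((2*M)^p) * ENNReal.ofReal (‖h‖ ^ (-((n:ℝ) + s*p))) := by
      intro h hh
      have hhn : ε < ‖h‖ := by simpa [mem_closedBall, dist_zero_right, not_le] using hh
      have hh0 : (0:ℝ) < ‖h‖ := lt_trans hε hhn
      rw [← ENNReal.ofReal_mul (by positivity)]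
      apply ENNReal.ofReal_le_ofReal
      have hnum : |φ (ε⁻¹ • (x + h)) - φ (ε⁻¹ • x)| ^ p ≤ (2*M)^p := by
        apply Real.rpow_le_rpow (abs_nonneg _) _ hp0.le
        calc |φ (ε⁻¹ • (x + h)) - φ (ε⁻¹ • x)| ≤ |φ (ε⁻¹ • (x + h))| + |φ (ε⁻¹ • x)| :=
              abs_sub _ _
          _ ≤ M + M := add_le_add (hbd _) (hbd _)
          _ = 2*M := by ring
      calc |φ (ε⁻¹ • (x + h)) - φ (ε⁻¹ • x)| ^ p / ‖h‖ ^ ((n : ℝ) + s * p)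
          ≤ (2*M)^p / ‖h‖ ^ ((n : ℝ) + s * p) :=
            div_le_div_of_nonneg_right hnum (Real.rpow_pos_of_pos hh0 _).le
        _ = (2*M)^p * ‖h‖ ^ (-((n:ℝ) + s*p)) := by
            rw [Real.rpow_neg hh0.le, div_eq_mul_inv]
    calc ∫⁻ h in (closedBall (0:Eu n) ε)ᶜ,
        ENNReal.ofReal (|φ (ε⁻¹ • (x + h)) - φ (ε⁻¹ • x)| ^ p / ‖h‖ ^ ((n : ℝ) + s * p))
        ≤ ∫⁻ h in (closedBall (0:Eu n) ε)ᶜ,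
          ENNReal.ofReal ((2*M)^p) * ENNReal.ofReal (‖h‖ ^ (-((n:ℝ) + s*p))) :=
          setLIntegral_mono (measurable_const.mul
            ((measurable_norm.pow measurable_const).ennreal_ofReal)) hpt
      _ = ENNReal.ofReal ((2*M)^p) *
          ∫⁻ h in (closedBall (0:Eu n) ε)ᶜ, ENNReal.ofReal (‖h‖ ^ (-((n:ℝ) + s*p))) := by
          rw [lintegral_const_mul]
          exact (measurable_norm.pow measurable_const).ennreal_ofReal
      _ ≤ _ := mul_le_mul_right (tail_lintegral n hsp hε) _
  calc _ ≤ ENNReal.ofReal ((L:ℝ)^p * ε^(-p)) * (ENNReal.ofReal (ε ^ (p - s*p)) * Ct n (p - s*p))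
        + ENNReal.ofReal ((2*M)^p) * (ENNReal.ofReal (ε ^ (-(s*p))) * Ct n (s*p)) :=
        add_le_add near far
    _ = ENNReal.ofReal (ε ^ (-(s*p))) * K1 n s p L M := by
        rw [K1]
        have e1 : ENNReal.ofReal ((L:ℝ)^p * ε^(-p)) * ENNReal.ofReal (ε ^ (p - s*p))
            = ENNReal.ofReal ((L:ℝ)^p) * ENNReal.ofReal (ε ^ (-(s*p))) := by
          rw [← ENNReal.ofReal_mul (by positivity), ← ENNReal.ofReal_mul (by positivity)]
          congr 1
          rw [mul_assoc, ← Real.rpow_add hε]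
          ring_nf
        have e2 : ENNReal.ofReal ((L:ℝ)^p * ε^(-p)) * (ENNReal.ofReal (ε ^ (p - s*p)) * Ct n (p - s*p))
            + ENNReal.ofReal ((2*M)^p) * (ENNReal.ofReal (ε ^ (-(s*p))) * Ct n (s*p))
            = (ENNReal.ofReal ((L:ℝ)^p * ε^(-p)) * ENNReal.ofReal (ε ^ (p - s*p))) * Ct n (p - s*p)
            + ENNReal.ofReal ((2*M)^p) * (ENNReal.ofReal (ε ^ (-(s*p))) * Ct n (s*p)) := by ring
        rw [e2, e1]
        ring

lemma bound2 (hs : 0 < s) (hp : 1 < p) (hbd : ∀ x, |φ x| ≤ M)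
    (hsupp : tsupport φ ⊆ closedBall (0 : Eu n) 1)
    {ε : ℝ} (hε : 0 < ε) {x : Eu n} (hx : 2*ε ≤ ‖x‖) :
    Dsp n s p (fun y => φ (ε⁻¹ • y)) x
      ≤ ENNReal.ofReal (ε^(n:ℕ) * ‖x‖ ^ (-((n:ℝ)+s*p))) * K2 n s p M := by
  have hM : 0 ≤ M := le_trans (abs_nonneg _) (hbd 0)
  have hp0 : (0:ℝ) < p := by linarith
  have hx0 : (0:ℝ) < ‖x‖ := lt_of_lt_of_le (by linarith) hx
  have hφ0 : ∀ y : Eu n, 1 < ‖y‖ → φ y = 0 := by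
    intro y hy
    apply image_eq_zero_of_notMem_tsupport
    intro hmem
    have := hsupp hmem
    rw [mem_closedBall, dist_zero_right] at this
    linarith
  have hnorm_smul : ∀ y : Eu n, ‖ε⁻¹ • y‖ = ε⁻¹ * ‖y‖ := by
    intro y
    rw [norm_smul, norm_inv, Real.norm_eq_abs, abs_of_pos hε]
  have hφx : φ (ε⁻¹ • x) = 0 := by
    apply hφ0
    rw [hnorm_smul]
    rw [inv_mul_eq_div]
    rw [lt_div_iff₀ hε]
    linarith
  have hpt : ∀ h : Eu n,
      ENNReal.ofReal (|φ (ε⁻¹ • (x + h)) - φ (ε⁻¹ • x)| ^ p / ‖h‖ ^ ((n : ℝ) + s * p))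
      ≤ (closedBall (-x) ε).indicator
          (fun _ => ENNReal.ofReal (M^p * (‖x‖/2) ^ (-((n:ℝ)+s*p)))) h := by
    intro h
    by_cases hmem : h ∈ closedBall (-x) ε
    · rw [Set.indicator_of_mem hmem]
      have hxh : ‖x + h‖ ≤ ε := by
        rw [mem_closedBall, dist_eq_norm, sub_neg_eq_add, add_comm] at hmem
        exact hmem
      have hhge : ‖x‖/2 ≤ ‖h‖ := by
        have : ‖x‖ ≤ ‖x + h‖ + ‖h‖ := by
          calc ‖x‖ = ‖(x + h) - h‖ := by rw [add_sub_cancel_right]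
            _ ≤ ‖x + h‖ + ‖h‖ := norm_sub_le _ _
        linarith
      apply ENNReal.ofReal_le_ofReal
      rw [hφx, sub_zero]
      have hd2 : (0:ℝ) < (‖x‖/2) ^ ((n:ℝ) + s*p) := Real.rpow_pos_of_pos (by positivity) _
      calc |φ (ε⁻¹ • (x + h))| ^ p / ‖h‖ ^ ((n : ℝ) + s * p)
          ≤ M^p / (‖x‖/2) ^ ((n:ℝ) + s*p) := by
            apply div_le_div₀ (by positivity)
              (Real.rpow_le_rpow (abs_nonneg _) (hbd _) hp0.le) hd2
            exact Real.rpow_le_rpow (by positivity) hhge (by positivity)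
        _ = M^p * (‖x‖/2) ^ (-((n:ℝ)+s*p)) := by
            rw [Real.rpow_neg (by positivity), div_eq_mul_inv]
    · rw [Set.indicator_of_notMem hmem]
      have hxh : ε < ‖x + h‖ := by
        rw [mem_closedBall, dist_eq_norm, sub_neg_eq_add, not_le, add_comm] at hmem
        exact hmem
      have : φ (ε⁻¹ • (x + h)) = 0 := by
        apply hφ0
        rw [hnorm_smul]
        rw [inv_mul_eq_div, lt_div_iff₀ hε]
        linarith
      rw [this, hφx]
      simp [Real.zero_rpow hp0.ne']
  calc Dsp n s p (fun y => φ (ε⁻¹ • y)) x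
      ≤ ∫⁻ h, (closedBall (-x) ε).indicator
          (fun _ => ENNReal.ofReal (M^p * (‖x‖/2) ^ (-((n:ℝ)+s*p)))) h :=
        lintegral_mono hpt
    _ = ENNReal.ofReal (M^p * (‖x‖/2) ^ (-((n:ℝ)+s*p))) * volume (closedBall (-x) ε) := by
        rw [lintegral_indicator measurableSet_closedBall, setLIntegral_const]
    _ = ENNReal.ofReal (ε^(n:ℕ) * ‖x‖ ^ (-((n:ℝ)+s*p))) * K2 n s p M := by
        rw [Measure.addHaar_closedBall _ _ hε.le, finrank_euclideanSpace_fin, K2,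
          ← mul_assoc, ← ENNReal.ofReal_mul (by positivity), ← mul_assoc,
          ← ENNReal.ofReal_mul (by positivity)]
        congr 2
        rw [Real.div_rpow (norm_nonneg x) (by norm_num : (0:ℝ) ≤ 2), div_eq_mul_inv,
          ← Real.rpow_neg (by norm_num : (0:ℝ) ≤ 2), neg_neg]
        ring
end Bounds

lemma else_integral (n : ℕ) (hn : 0 < n) {σ Q : ℝ} (hσ : 0 < σ) (hQ0 : 0 < Q)
    (hQprod : σ * Q = n) (K2' : ℝ≥0∞) {ε r : ℝ} (hε : 0 < ε) (hr : 0 < r) :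
    ∫⁻ x in (closedBall (0:Eu n) r)ᶜ,
        (ENNReal.ofReal (ε^(n:ℕ) * ‖x‖ ^ (-((n:ℝ)+σ))) * K2') ^ Q
      ≤ ENNReal.ofReal (ε ^ ((n:ℝ)*Q)) *
          (K2'^Q * (ENNReal.ofReal (r ^ (-((n:ℝ)*Q))) * Ct n ((n:ℝ)*Q))) := by
  have hnQ : 0 < (n:ℝ)*Q := by positivity
  have hptw : ∀ x : Eu n,
      (ENNReal.ofReal (ε^(n:ℕ) * ‖x‖ ^ (-((n:ℝ)+σ))) * K2') ^ Q
        = ENNReal.ofReal (ε ^ ((n:ℝ)*Q)) * K2'^Q *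
            ENNReal.ofReal (‖x‖ ^ (-((n:ℝ) + (n:ℝ)*Q))) := by
    intro x
    rw [ENNReal.mul_rpow_of_nonneg _ _ hQ0.le,
      ENNReal.ofReal_mul (by positivity),
      ENNReal.mul_rpow_of_nonneg _ _ hQ0.le,
      ENNReal.ofReal_rpow_of_nonneg (by positivity) hQ0.le,
      ENNReal.ofReal_rpow_of_nonneg (by positivity) hQ0.le]
    have e1 : (ε^(n:ℕ) : ℝ) ^ Q = ε ^ ((n:ℝ)*Q) := by
      rw [← Real.rpow_natCast ε n, ← Real.rpow_mul hε.le]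
    have e2 : ((‖x‖ ^ (-((n:ℝ)+σ))) : ℝ) ^ Q = ‖x‖ ^ (-((n:ℝ) + (n:ℝ)*Q)) := by
      rw [← Real.rpow_mul (norm_nonneg x)]
      congr 1
      nlinarith [hQprod]
    rw [e1, e2]
    ring
  calc ∫⁻ x in (closedBall (0:Eu n) r)ᶜ,
        (ENNReal.ofReal (ε^(n:ℕ) * ‖x‖ ^ (-((n:ℝ)+σ))) * K2') ^ Q
      = ∫⁻ x in (closedBall (0:Eu n) r)ᶜ,
          ENNReal.ofReal (ε ^ ((n:ℝ)*Q)) * K2'^Q *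
            ENNReal.ofReal (‖x‖ ^ (-((n:ℝ) + (n:ℝ)*Q))) := by
        apply lintegral_congr
        exact fun x => hptw x
    _ = ENNReal.ofReal (ε ^ ((n:ℝ)*Q)) * K2'^Q *
          ∫⁻ x in (closedBall (0:Eu n) r)ᶜ, ENNReal.ofReal (‖x‖ ^ (-((n:ℝ) + (n:ℝ)*Q))) := by
        rw [lintegral_const_mul]
        exact (measurable_norm.pow measurable_const).ennreal_ofReal
    _ ≤ ENNReal.ofReal (ε ^ ((n:ℝ)*Q)) * K2'^Q *
          (ENNReal.ofReal (r ^ (-((n:ℝ)*Q))) * Ct n ((n:ℝ)*Q)) :=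
        mul_le_mul_right (tail_lintegral n hnQ hr) _
    _ = ENNReal.ofReal (ε ^ ((n:ℝ)*Q)) *
          (K2'^Q * (ENNReal.ofReal (r ^ (-((n:ℝ)*Q))) * Ct n ((n:ℝ)*Q))) := by ring

lemma if_region (n : ℕ) {σ Q : ℝ} (hσ : 0 < σ) (hQ0 : 0 < Q)
    (hQprod : σ * Q = n) (K1' : ℝ≥0∞) {ε : ℝ} (hε : 0 < ε) :
    ∫⁻ x in {x : Eu n | ‖x‖ < 2*ε}, (ENNReal.ofReal (ε ^ (-σ)) * K1') ^ Q
      ≤ K1'^Q * (ENNReal.ofReal (2 ^ (n:ℝ)) * volume (ball (0:Eu n) 1)) := by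
  have hc : (ENNReal.ofReal (ε ^ (-σ)) * K1') ^ Q
      = ENNReal.ofReal (ε ^ (-((n:ℝ)))) * K1'^Q := by
    rw [ENNReal.mul_rpow_of_nonneg _ _ hQ0.le,
      ENNReal.ofReal_rpow_of_nonneg (by positivity) hQ0.le,
      ← Real.rpow_mul hε.le]
    congr 3
    nlinarith [hQprod]
  rw [lintegral_const, hc]
  have hvol : (volume.restrict {x : Eu n | ‖x‖ < 2*ε}) Set.univ
      ≤ ENNReal.ofReal ((2*ε) ^ (n:ℕ)) * volume (ball (0:Eu n) 1) := by
    rw [Measure.restrict_apply_univ]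
    have hsub : {x : Eu n | ‖x‖ < 2*ε} ⊆ closedBall (0:Eu n) (2*ε) := by
      intro x hx
      rw [mem_closedBall, dist_zero_right]
      exact le_of_lt hx
    calc volume {x : Eu n | ‖x‖ < 2*ε} ≤ volume (closedBall (0:Eu n) (2*ε)) :=
          measure_mono hsub
      _ = ENNReal.ofReal ((2*ε) ^ (n:ℕ)) * volume (ball (0:Eu n) 1) := by
          rw [Measure.addHaar_closedBall _ _ (by positivity), finrank_euclideanSpace_fin]
  calc ENNReal.ofReal (ε ^ (-((n:ℝ)))) * K1'^Q * (volume.restrict {x : Eu n | ‖x‖ < 2*ε}) Set.univ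
      ≤ ENNReal.ofReal (ε ^ (-((n:ℝ)))) * K1'^Q *
        (ENNReal.ofReal ((2*ε) ^ (n:ℕ)) * volume (ball (0:Eu n) 1)) := mul_le_mul_right hvol _
    _ = K1'^Q * (ENNReal.ofReal (2 ^ (n:ℝ)) * volume (ball (0:Eu n) 1)) := by
        have key : ENNReal.ofReal (ε ^ (-((n:ℝ)))) * ENNReal.ofReal ((2*ε) ^ (n:ℕ))
            = ENNReal.ofReal (2 ^ (n:ℝ)) := by
          rw [← ENNReal.ofReal_mul (by positivity)]
          congr 1
          rw [← Real.rpow_natCast (2*ε) n, Real.mul_rpow (by norm_num) hε.le,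
            ← mul_assoc, mul_comm (ε ^ (-(n:ℝ))) _, mul_assoc, ← Real.rpow_add hε]
          simp
        calc ENNReal.ofReal (ε ^ (-((n:ℝ)))) * K1'^Q *
              (ENNReal.ofReal ((2*ε) ^ (n:ℕ)) * volume (ball (0:Eu n) 1))
            = (ENNReal.ofReal (ε ^ (-((n:ℝ)))) * ENNReal.ofReal ((2*ε) ^ (n:ℕ))) *
              (K1'^Q * volume (ball (0:Eu n) 1)) := by ring
          _ = _ := by rw [key]; ring

end AuxVanishing

/-- for `u ∈ L^{p*_s}(ℝ^n)` and `φ_ε(x) = φ(x/ε)` with `φ` Lipschitz, bounded,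
supported in the unit ball, `∫ |u|^p |D^s φ_ε|^p dx → 0` as `ε → 0⁺`. -/
theorem vanishing_weighted_integral (n : ℕ) (s p : ℝ)
    (hs : 0 < s) (hs1 : s < 1) (hp : 1 < p) (hspn : s * p < n)
    (u : Eu n → ℝ) (humeas : Measurable u)
    (hu : MemLp u (ENNReal.ofReal (n * p / (n - s * p))))
    (φ : Eu n → ℝ) (L : NNReal) (hlip : LipschitzWith L φ)
    (M : ℝ) (hbd : ∀ x, |φ x| ≤ M)
    (hsupp : tsupport φ ⊆ closedBall (0 : Eu n) 1) :
    Tendsto (fun ε : ℝ =>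
        ∫⁻ x, ENNReal.ofReal (|u x| ^ p) * Dsp n s p (fun y => φ (ε⁻¹ • y)) x)
      (𝓝[>] 0) (𝓝 0) := by
  classical
  have hσ : 0 < s * p := by positivity
  have hnR : (0:ℝ) < n := lt_trans hσ hspn
  have hn : 0 < n := by exact_mod_cast Nat.cast_pos.mp hnR
  have hnσ : (0:ℝ) < (n:ℝ) - s * p := by linarith
  set σ := s * p with hσdef
  set P : ℝ := (n:ℝ) / ((n:ℝ) - σ) with hPdef
  set Q : ℝ := (n:ℝ) / σ with hQdef
  have hP0 : 0 < P := by positivity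
  have hQ0 : 0 < Q := by positivity
  have hPQ : Real.HolderConjugate P Q := by
    rw [Real.holderConjugate_iff]
    constructor
    · rw [hPdef]
      rw [lt_div_iff₀ hnσ]
      linarith
    · rw [hPdef, hQdef]
      field_simp
      ring
  have hQprod : σ * Q = (n:ℝ) := by
    rw [hQdef]
    field_simp
  set pstar : ℝ := (n:ℝ) * p / ((n:ℝ) - s * p) with hpsdef
  have hps0 : 0 < pstar := by positivity
  have hpP : p * P = pstar := by
    rw [hPdef, hpsdef, hσdef]
    field_simp
  set f : Eu n → ℝ≥0∞ := fun x => ENNReal.ofReal (|u x| ^ p) with hfdef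
  have hfmeas : Measurable f := ((humeas.abs).pow measurable_const).ennreal_ofReal
  have hfP : ∀ x, f x ^ P = ENNReal.ofReal (|u x| ^ pstar) := by
    intro x
    rw [hfdef]
    rw [ENNReal.ofReal_rpow_of_nonneg (by positivity) hP0.le,
      ← Real.rpow_mul (abs_nonneg _), hpP]
  have hIu : ∫⁻ x, ENNReal.ofReal (|u x| ^ pstar) ≠ ⊤ := by
    have hq0 : ENNReal.ofReal (↑n * p / (↑n - s * p)) ≠ 0 := by
      simp only [ne_eq, ENNReal.ofReal_eq_zero, not_le]
      exact hps0
    have hqt : ENNReal.ofReal (↑n * p / (↑n - s * p)) ≠ ⊤ := ENNReal.ofReal_ne_top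
    have h1 := hu.2
    rw [eLpNorm_eq_lintegral_rpow_enorm_toReal hq0 hqt] at h1
    rw [ENNReal.toReal_ofReal hps0.le] at h1
    have h2 : ∫⁻ x, ENNReal.ofReal (|u x| ^ pstar)
        = ∫⁻ x, ‖u x‖ₑ ^ ((n:ℝ) * p / ((n:ℝ) - s * p)) := by
      apply lintegral_congr
      intro x
      rw [Real.enorm_eq_ofReal_abs,
        ENNReal.ofReal_rpow_of_nonneg (abs_nonneg _) hps0.le]
    rw [h2]
    intro hcon
    rw [hcon] at h1
    rw [ENNReal.top_rpow_of_pos (by positivity)] at h1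
    exact (lt_irrefl _ h1).elim
  set B : ℝ≥0∞ := volume (ball (0:Eu n) 1) with hBdef
  have hB : B ≠ ⊤ := measure_ball_lt_top.ne
  set K1' : ℝ≥0∞ := K1 n s p L M with hK1def
  set K2' : ℝ≥0∞ := K2 n s p M with hK2def
  have hpsp : 0 < p - s * p := by nlinarith
  have hK1 : K1' ≠ ⊤ := by
    rw [hK1def, K1]
    exact (ENNReal.add_lt_top.mpr
      ⟨ENNReal.mul_lt_top ENNReal.ofReal_lt_top (Ct_lt_top n hpsp),
       ENNReal.mul_lt_top ENNReal.ofReal_lt_top (Ct_lt_top n hσ)⟩).ne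
  have hK2 : K2' ≠ ⊤ := by
    rw [hK2def, K2]
    exact (ENNReal.mul_lt_top ENNReal.ofReal_lt_top measure_ball_lt_top).ne
  set g : ℝ → Eu n → ℝ≥0∞ := fun ε x =>
    if ‖x‖ < 2*ε then ENNReal.ofReal (ε ^ (-σ)) * K1'
    else ENNReal.ofReal (ε^(n:ℕ) * ‖x‖ ^ (-((n:ℝ)+σ))) * K2' with hgdef
  have hgmeas : ∀ ε : ℝ, Measurable (g ε) := by
    intro ε
    apply Measurable.ite
    · exact measurableSet_lt measurable_norm measurable_const
    · exact measurable_const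
    · exact ((measurable_const.mul
        (measurable_norm.pow measurable_const)).ennreal_ofReal).mul_const _
  have hDg : ∀ ε : ℝ, 0 < ε → ∀ x,
      Dsp n s p (fun y => φ (ε⁻¹ • y)) x ≤ g ε x := by
    intro ε hε x
    by_cases hx : ‖x‖ < 2*ε
    · simp only [hgdef, if_pos hx]
      exact bound1 hn hs hs1 hp hspn hlip hbd hε x
    · simp only [hgdef, if_neg hx]
      exact bound2 hs hp hbd hsupp hε (not_lt.mp hx)
  set C0 : ℝ≥0∞ := K1'^Q * (ENNReal.ofReal (2 ^ (n:ℝ)) * B)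
    + K2'^Q * Ct n ((n:ℝ)*Q) with hC0def
  have hC0top : C0 ≠ ⊤ := by
    rw [hC0def]
    refine (ENNReal.add_lt_top.mpr ⟨?_, ?_⟩).ne
    · exact ENNReal.mul_lt_top (ENNReal.rpow_lt_top_of_nonneg hQ0.le hK1)
        (ENNReal.mul_lt_top ENNReal.ofReal_lt_top measure_ball_lt_top)
    · exact ENNReal.mul_lt_top (ENNReal.rpow_lt_top_of_nonneg hQ0.le hK2)
        (Ct_lt_top n (by positivity))
  have hgQ : ∀ ε : ℝ, 0 < ε → ∫⁻ x, g ε x ^ Q ≤ C0 := by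
    intro ε hε
    have hset : MeasurableSet {x : Eu n | ‖x‖ < 2*ε} :=
      measurableSet_lt measurable_norm measurable_const
    rw [← lintegral_add_compl (fun x => g ε x ^ Q) hset]
    apply add_le_add
    · have heq : ∫⁻ x in {x : Eu n | ‖x‖ < 2*ε}, g ε x ^ Q
          = ∫⁻ x in {x : Eu n | ‖x‖ < 2*ε}, (ENNReal.ofReal (ε ^ (-σ)) * K1') ^ Q := by
        apply setLIntegral_congr_fun_ae hset
        apply ae_of_all
        intro x hx
        rw [Set.mem_setOf_eq] at hx
        have hg1 : g ε x = ENNReal.ofReal (ε ^ (-σ)) * K1' := by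
          simp only [hgdef]
          exact if_pos hx
        rw [hg1]
      rw [heq]
      exact if_region n hσ hQ0 hQprod K1' hε
    · have heq : ∫⁻ x in {x : Eu n | ‖x‖ < 2*ε}ᶜ, g ε x ^ Q
          = ∫⁻ x in {x : Eu n | ‖x‖ < 2*ε}ᶜ,
              (ENNReal.ofReal (ε^(n:ℕ) * ‖x‖ ^ (-((n:ℝ)+σ))) * K2') ^ Q := by
        apply setLIntegral_congr_fun_ae hset.compl
        apply ae_of_all
        intro x hx
        simp only [Set.mem_compl_iff, Set.mem_setOf_eq, not_lt] at hx
        have hg1 : g ε x = ENNReal.ofReal (ε^(n:ℕ) * ‖x‖ ^ (-((n:ℝ)+σ))) * K2' := by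
          simp only [hgdef]
          exact if_neg (not_lt.mpr hx)
        rw [hg1]
      rw [heq]
      have hsub : {x : Eu n | ‖x‖ < 2*ε}ᶜ ⊆ (closedBall (0:Eu n) ε)ᶜ := by
        intro x hx
        simp only [Set.mem_compl_iff, Set.mem_setOf_eq, not_lt] at hx
        simp only [Set.mem_compl_iff, mem_closedBall, dist_zero_right, not_le]
        linarith
      calc ∫⁻ x in {x : Eu n | ‖x‖ < 2*ε}ᶜ,
            (ENNReal.ofReal (ε^(n:ℕ) * ‖x‖ ^ (-((n:ℝ)+σ))) * K2') ^ Q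
          ≤ ∫⁻ x in (closedBall (0:Eu n) ε)ᶜ,
            (ENNReal.ofReal (ε^(n:ℕ) * ‖x‖ ^ (-((n:ℝ)+σ))) * K2') ^ Q :=
            lintegral_mono_set hsub
        _ ≤ ENNReal.ofReal (ε ^ ((n:ℝ)*Q)) *
            (K2'^Q * (ENNReal.ofReal (ε ^ (-((n:ℝ)*Q))) * Ct n ((n:ℝ)*Q))) :=
            else_integral n hn hσ hQ0 hQprod K2' hε hε
        _ = K2'^Q * Ct n ((n:ℝ)*Q) := by
            have e : ENNReal.ofReal (ε ^ ((n:ℝ)*Q)) *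
                (K2'^Q * (ENNReal.ofReal (ε ^ (-((n:ℝ)*Q))) * Ct n ((n:ℝ)*Q)))
                = (ENNReal.ofReal (ε ^ ((n:ℝ)*Q)) * ENNReal.ofReal (ε ^ (-((n:ℝ)*Q)))) *
                  (K2'^Q * Ct n ((n:ℝ)*Q)) := by ring
            rw [e, ← ENNReal.ofReal_mul (by positivity), ← Real.rpow_add hε,
              add_neg_cancel, Real.rpow_zero, ENNReal.ofReal_one, one_mul]
  have holder : ∀ (ε : ℝ) (S : Set (Eu n)),
      ∫⁻ x in S, f x * g ε x
        ≤ (∫⁻ x in S, ENNReal.ofReal (|u x| ^ pstar)) ^ (1/P) *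
          (∫⁻ x in S, g ε x ^ Q) ^ (1/Q) := by
    intro ε S
    have h1 := ENNReal.lintegral_mul_le_Lp_mul_Lq (volume.restrict S) hPQ
      hfmeas.aemeasurable (hgmeas ε).aemeasurable
    simp only [Pi.mul_apply] at h1
    have h2 : ∫⁻ x in S, f x ^ P = ∫⁻ x in S, ENNReal.ofReal (|u x| ^ pstar) :=
      lintegral_congr fun x => hfP x
    rw [h2] at h1
    exact h1
  set Au : ℝ≥0∞ := (∫⁻ x, ENNReal.ofReal (|u x| ^ pstar)) ^ (1/P) with hAudef
  have hAu : Au ≠ ⊤ := ENNReal.rpow_ne_top_of_nonneg (by positivity) hIu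
  rw [ENNReal.tendsto_nhds_zero]
  intro η hη
  set D : ℝ≥0∞ := C0 ^ (1/Q) with hDdef
  have hD : D ≠ ⊤ := ENNReal.rpow_ne_top_of_nonneg (by positivity) hC0top
  set c : ℝ≥0∞ := ((η/2) * (D+1)⁻¹) ^ P with hcdef
  have hc0 : c ≠ 0 := by
    rw [hcdef]
    simp only [ne_eq, ENNReal.rpow_eq_zero_iff, not_or, not_and, not_lt]
    constructor
    · intro hzero
      exfalso
      rcases mul_eq_zero.mp hzero with h | h
      · exact (ENNReal.div_ne_zero.mpr ⟨hη.ne', ENNReal.ofNat_ne_top⟩) h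
      · rw [ENNReal.inv_eq_zero] at h
        exact (ENNReal.add_ne_top.mpr ⟨hD, ENNReal.one_ne_top⟩) h
    · intro _
      exact hP0.le
  obtain ⟨δ₀, hδ₀, hsmall⟩ := exists_pos_setLIntegral_lt_of_measure_lt hIu hc0
  have hballex : ∃ δ : ℝ, 0 < δ ∧ volume (ball (0:Eu n) δ) < δ₀ := by
    have h1 : Tendsto (fun t : ℝ => ENNReal.ofReal (t ^ (n:ℕ)) * B) (𝓝[>] 0) (𝓝 0) := by
      have h2 : Tendsto (fun t : ℝ => t ^ (n:ℕ)) (𝓝 0) (𝓝 0) := by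
        have := (continuous_pow (n:ℕ)).tendsto (0:ℝ)
        rwa [zero_pow hn.ne'] at this
      have h3 : Tendsto (fun t : ℝ => ENNReal.ofReal (t ^ (n:ℕ))) (𝓝 0) (𝓝 0) := by
        have := ENNReal.tendsto_ofReal h2
        rwa [ENNReal.ofReal_zero] at this
      have h4 := ENNReal.Tendsto.mul_const h3 (Or.inr hB)
      rw [zero_mul] at h4
      exact h4.mono_left nhdsWithin_le_nhds
    have h5 : ∀ᶠ t in 𝓝[>] (0:ℝ), ENNReal.ofReal (t ^ (n:ℕ)) * B < δ₀ :=
      h1.eventually_lt_const hδ₀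
    obtain ⟨t, ht1, ht2⟩ := (h5.and self_mem_nhdsWithin).exists
    refine ⟨t, ht2, ?_⟩
    calc volume (ball (0:Eu n) t) ≤ volume (closedBall (0:Eu n) t) :=
          measure_mono ball_subset_closedBall
      _ = ENNReal.ofReal (t ^ (n:ℕ)) * B := by
          rw [Measure.addHaar_closedBall _ _ (le_of_lt ht2), finrank_euclideanSpace_fin]
      _ < δ₀ := ht1
  obtain ⟨δ, hδ, hvolδ⟩ := hballex
  have hballsmall : ∫⁻ x in ball (0:Eu n) δ, ENNReal.ofReal (|u x| ^ pstar) < c :=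
    hsmall _ hvolδ
  set E : ℝ≥0∞ := K2'^Q * (ENNReal.ofReal ((δ/2) ^ (-((n:ℝ)*Q))) * Ct n ((n:ℝ)*Q)) with hEdef
  have hE : E ≠ ⊤ := by
    rw [hEdef]
    exact (ENNReal.mul_lt_top (ENNReal.rpow_lt_top_of_nonneg hQ0.le hK2)
      (ENNReal.mul_lt_top ENNReal.ofReal_lt_top (Ct_lt_top n (by positivity)))).ne
  set G : ℝ≥0∞ := Au * E ^ (1/Q) with hGdef
  have hG : G ≠ ⊤ := by
    rw [hGdef]
    exact ENNReal.mul_ne_top hAu (ENNReal.rpow_ne_top_of_nonneg (by positivity) hE)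
  have hT2ev : ∀ᶠ ε in 𝓝[>] (0:ℝ), ENNReal.ofReal (ε ^ ((n:ℝ))) * G ≤ η/2 := by
    have htend : Tendsto (fun ε : ℝ => ENNReal.ofReal (ε ^ ((n:ℝ))) * G) (𝓝[>] 0) (𝓝 0) := by
      have h2 : Tendsto (fun ε : ℝ => ε ^ ((n:ℝ))) (𝓝 0) (𝓝 0) := by
        have := (Real.continuousAt_rpow_const 0 ((n:ℝ)) (Or.inr hnR.le)).tendsto
        rwa [Real.zero_rpow hnR.ne'] at this
      have h3 : Tendsto (fun ε : ℝ => ENNReal.ofReal (ε ^ ((n:ℝ)))) (𝓝 0) (𝓝 0) := by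
        have := ENNReal.tendsto_ofReal h2
        rwa [ENNReal.ofReal_zero] at this
      have h4 := ENNReal.Tendsto.mul_const h3 (Or.inr hG)
      rw [zero_mul] at h4
      exact h4.mono_left nhdsWithin_le_nhds
    exact ENNReal.tendsto_nhds_zero.mp htend (η/2) (ENNReal.half_pos hη.ne')
  have hIoo : Set.Ioo (0:ℝ) (δ/2) ∈ 𝓝[>] (0:ℝ) := Ioo_mem_nhdsGT (by positivity)
  filter_upwards [hT2ev, hIoo] with ε hT2 hεI
  obtain ⟨hε, hεδ⟩ := hεI
  -- main estimate for this ε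
  have key1 : ∫⁻ x in ball (0:Eu n) δ, f x * g ε x ≤ η/2 := by
    have h1 := holder ε (ball (0:Eu n) δ)
    have h2 : (∫⁻ x in ball (0:Eu n) δ, ENNReal.ofReal (|u x| ^ pstar)) ^ (1/P)
        ≤ c ^ (1/P) := ENNReal.rpow_le_rpow hballsmall.le (by positivity)
    have h3 : (∫⁻ x in ball (0:Eu n) δ, g ε x ^ Q) ^ (1/Q) ≤ D := by
      rw [hDdef]
      apply ENNReal.rpow_le_rpow _ (by positivity)
      exact le_trans (lintegral_mono' Measure.restrict_le_self le_rfl) (hgQ ε hε)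
    have h4 : c ^ (1/P) = (η/2) * (D+1)⁻¹ := by
      rw [hcdef, ← ENNReal.rpow_mul, mul_one_div, div_self hP0.ne', ENNReal.rpow_one]
    calc ∫⁻ x in ball (0:Eu n) δ, f x * g ε x
        ≤ (∫⁻ x in ball (0:Eu n) δ, ENNReal.ofReal (|u x| ^ pstar)) ^ (1/P) *
          (∫⁻ x in ball (0:Eu n) δ, g ε x ^ Q) ^ (1/Q) := h1
      _ ≤ c ^ (1/P) * D := mul_le_mul' h2 h3
      _ = (η/2) * ((D+1)⁻¹ * D) := by rw [h4]; ring
      _ ≤ (η/2) * 1 := by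
          apply mul_le_mul_right
          calc (D+1)⁻¹ * D ≤ (D+1)⁻¹ * (D+1) := mul_le_mul_right le_self_add _
            _ = 1 := ENNReal.inv_mul_cancel (by simp) (ENNReal.add_ne_top.mpr ⟨hD, ENNReal.one_ne_top⟩)
      _ = η/2 := mul_one _
  have key2 : ∫⁻ x in (ball (0:Eu n) δ)ᶜ, f x * g ε x ≤ η/2 := by
    have h1 := holder ε ((ball (0:Eu n) δ)ᶜ)
    have h2 : (∫⁻ x in (ball (0:Eu n) δ)ᶜ, ENNReal.ofReal (|u x| ^ pstar)) ^ (1/P) ≤ Au := by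
      rw [hAudef]
      apply ENNReal.rpow_le_rpow _ (by positivity)
      exact lintegral_mono' Measure.restrict_le_self le_rfl
    have h3 : ∫⁻ x in (ball (0:Eu n) δ)ᶜ, g ε x ^ Q ≤ ENNReal.ofReal (ε ^ ((n:ℝ)*Q)) * E := by
      have heq : ∫⁻ x in (ball (0:Eu n) δ)ᶜ, g ε x ^ Q
          = ∫⁻ x in (ball (0:Eu n) δ)ᶜ,
              (ENNReal.ofReal (ε^(n:ℕ) * ‖x‖ ^ (-((n:ℝ)+σ))) * K2') ^ Q := by
        apply setLIntegral_congr_fun_ae measurableSet_ball.compl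
        apply ae_of_all
        intro x hx
        simp only [Set.mem_compl_iff, mem_ball, dist_zero_right, not_lt] at hx
        have hnl : ¬ (‖x‖ < 2*ε) := by push_neg; linarith
        have hg1 : g ε x = ENNReal.ofReal (ε^(n:ℕ) * ‖x‖ ^ (-((n:ℝ)+σ))) * K2' := by
          simp only [hgdef]
          exact if_neg hnl
        rw [hg1]
      rw [heq]
      have hsub : (ball (0:Eu n) δ)ᶜ ⊆ (closedBall (0:Eu n) (δ/2))ᶜ := by
        intro x hx
        simp only [Set.mem_compl_iff, mem_ball, dist_zero_right, not_lt] at hx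
        simp only [Set.mem_compl_iff, mem_closedBall, dist_zero_right, not_le]
        linarith
      calc ∫⁻ x in (ball (0:Eu n) δ)ᶜ,
            (ENNReal.ofReal (ε^(n:ℕ) * ‖x‖ ^ (-((n:ℝ)+σ))) * K2') ^ Q
          ≤ ∫⁻ x in (closedBall (0:Eu n) (δ/2))ᶜ,
            (ENNReal.ofReal (ε^(n:ℕ) * ‖x‖ ^ (-((n:ℝ)+σ))) * K2') ^ Q :=
            lintegral_mono_set hsub
        _ ≤ ENNReal.ofReal (ε ^ ((n:ℝ)*Q)) * E := by
            rw [hEdef]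
            exact else_integral n hn hσ hQ0 hQprod K2' hε (by positivity)
    have h5 : (ENNReal.ofReal (ε ^ ((n:ℝ)*Q)) * E) ^ (1/Q)
        = ENNReal.ofReal (ε ^ ((n:ℝ))) * E ^ (1/Q) := by
      rw [ENNReal.mul_rpow_of_nonneg _ _ (by positivity),
        ENNReal.ofReal_rpow_of_nonneg (by positivity) (by positivity),
        ← Real.rpow_mul hε.le]
      congr 2
      field_simp
    calc ∫⁻ x in (ball (0:Eu n) δ)ᶜ, f x * g ε x
        ≤ (∫⁻ x in (ball (0:Eu n) δ)ᶜ, ENNReal.ofReal (|u x| ^ pstar)) ^ (1/P) *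
          (∫⁻ x in (ball (0:Eu n) δ)ᶜ, g ε x ^ Q) ^ (1/Q) := h1
      _ ≤ Au * (ENNReal.ofReal (ε ^ ((n:ℝ)*Q)) * E) ^ (1/Q) :=
          mul_le_mul' h2 (ENNReal.rpow_le_rpow h3 (by positivity))
      _ = ENNReal.ofReal (ε ^ ((n:ℝ))) * G := by rw [h5, hGdef]; ring
      _ ≤ η/2 := hT2
  calc ∫⁻ x, ENNReal.ofReal (|u x| ^ p) * Dsp n s p (fun y => φ (ε⁻¹ • y)) x
      ≤ ∫⁻ x, f x * g ε x := by
        apply lintegral_mono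
        intro x
        exact mul_le_mul_right (hDg ε hε x) _
    _ = (∫⁻ x in ball (0:Eu n) δ, f x * g ε x)
        + ∫⁻ x in (ball (0:Eu n) δ)ᶜ, f x * g ε x :=
        (lintegral_add_compl _ measurableSet_ball).symm
    _ ≤ η/2 + η/2 := add_le_add key1 key2
    _ = η := ENNReal.add_halves η
end
end

section
/- For u ∈ L^{p*_s}(R^n) and ε > 0, the dyadic decomposition estimate ε^n ∫_{|x| ≥ ε} |u(x)|^p |x|^{-(n+sp)} dx ≤ c Σ_{k=0}^{∞} 2^{-nk} (∫_{|x| < 2^{k+1}ε} |u|^{p*_s} dx)^{p/p*_s} holds, where c depends only on n, s, p. -/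
open MeasureTheory ENNReal Filter Metric Topology

noncomputable section

private lemma shell_exists {ε x : ℝ} (hε : 0 < ε) (hx : ε ≤ x) :
    ∃ k : ℕ, 2 ^ k * ε ≤ x ∧ x < 2 ^ (k + 1) * ε := by
  classical
  have hex : ∃ m : ℕ, x < 2 ^ m * ε := by
    obtain ⟨m, hm⟩ := pow_unbounded_of_one_lt (x / ε) (one_lt_two (α := ℝ))
    exact ⟨m, (div_lt_iff₀ hε).mp hm⟩
  have hK0 : Nat.find hex ≠ 0 := by
    intro h
    have := Nat.find_spec hex
    rw [h] at this
    simp only [pow_zero, one_mul] at this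
    exact absurd hx (not_le.mpr this)
  obtain ⟨k, hk⟩ := Nat.exists_eq_succ_of_ne_zero hK0
  refine ⟨k, ?_, ?_⟩
  · have := Nat.find_min hex (m := k) (by omega)
    exact not_lt.mp this
  · have := Nat.find_spec hex
    rwa [hk] at this

set_option maxHeartbeats 1600000 in
/-- dyadic decomposition estimate:
`ε^n ∫_{|x|≥ε} |u|^p |x|^{-(n+sp)} dx ≤ c Σ_k 2^{-nk} (∫_{|x|<2^{k+1}ε} |u|^{p*_s})^{p/p*_s}`. -/
theorem dyadic_decomposition_estimate (n : ℕ) (s p : ℝ)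
    (hs : 0 < s) (hs1 : s < 1) (hp : 1 < p) (hspn : s * p < n)
    (u : Eu n → ℝ) (humeas : Measurable u)
    (hu : MemLp u (ENNReal.ofReal (n * p / (n - s * p)))) :
    ∃ c > (0 : ℝ), ∀ ε : ℝ, 0 < ε →
      ENNReal.ofReal (ε ^ (n : ℝ)) *
          (∫⁻ x in {x : Eu n | ε ≤ ‖x‖},
            ENNReal.ofReal (|u x| ^ p / ‖x‖ ^ ((n : ℝ) + s * p)))
        ≤ ENNReal.ofReal c * ∑' k : ℕ, ENNReal.ofReal ((2 : ℝ) ^ (-(n : ℝ) * k)) *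
            (∫⁻ x in ball (0 : Eu n) (2 ^ (k + 1) * ε),
                ENNReal.ofReal (|u x| ^ (n * p / (n - s * p))))
              ^ (p / (n * p / (n - s * p))) := by
  have hp0 : (0:ℝ) < p := zero_lt_one.trans hp
  have hsp0 : 0 < s * p := mul_pos hs hp0
  have hn0 : (0:ℝ) < n := hsp0.trans hspn
  have hnn : 0 < n := Nat.cast_pos.mp hn0
  haveI : Nonempty (Fin n) := Fin.pos_iff_nonempty.mp hnn
  haveI : Nontrivial (Eu n) := by infer_instance
  have hns : (0:ℝ) < (n:ℝ) - s * p := sub_pos.mpr hspn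
  set q : ℝ := n * p / (n - s * p) with hqdef
  have hq0 : 0 < q := div_pos (mul_pos hn0 hp0) hns
  have hpq : p < q := by
    rw [hqdef, lt_div_iff₀ hns]
    nlinarith
  have hpqne : p * (q / p) = q := by field_simp
  have hconj : Real.HolderConjugate (q / p) ((n:ℝ) / (s * p)) := by
    constructor
    · rw [inv_div, inv_div, hqdef, inv_one]
      field_simp
      ring
    · exact div_pos hq0 hp0
    · positivity
  set B : ℝ≥0∞ := volume (ball (0 : Eu n) 1) with hB
  have hBpos : B ≠ 0 := (measure_ball_pos _ _ one_pos).ne'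
  have hBtop : B ≠ ⊤ := measure_ball_lt_top.ne
  have hBrpos : 0 < B.toReal := ENNReal.toReal_pos hBpos hBtop
  refine ⟨2 ^ (s*p) * (B.toReal) ^ (s*p/(n:ℝ)), by positivity, ?_⟩
  intro ε hε
  set A : ℕ → Set (Eu n) :=
    fun k => {x : Eu n | 2 ^ k * ε ≤ ‖x‖} ∩ {x : Eu n | ‖x‖ < 2 ^ (k+1) * ε} with hA
  have hAm : ∀ k, MeasurableSet (A k) := fun k =>
    (measurableSet_le measurable_const measurable_norm).inter
      (measurableSet_lt measurable_norm measurable_const)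
  have hdis : ∀ i j : ℕ, i < j → Disjoint (A i) (A j) := by
    intro i j hlt
    refine Set.disjoint_left.mpr ?_
    rintro x ⟨hi1, hi2⟩ ⟨hj1, hj2⟩
    have h1 : (2:ℝ)^(i+1) * ε ≤ 2^j * ε := by
      have h2 : (2:ℝ)^(i+1) ≤ 2^j := pow_le_pow_right₀ one_le_two hlt
      exact mul_le_mul_of_nonneg_right h2 hε.le
    exact absurd (lt_of_lt_of_le hi2 (h1.trans hj1)) (lt_irrefl _)
  have hAdis : Pairwise (Function.onFun Disjoint A) := by
    intro i j hij
    rcases hij.lt_or_gt with h | h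
    · exact hdis i j h
    · exact (hdis j i h).symm
  have hcover : {x : Eu n | ε ≤ ‖x‖} = ⋃ k, A k := by
    ext x
    simp only [Set.mem_setOf_eq, Set.mem_iUnion, Set.mem_inter_iff]
    constructor
    · intro hx
      exact shell_exists hε hx
    · rintro ⟨k, hk1, _⟩
      calc ε = 1 * ε := (one_mul ε).symm
        _ ≤ 2^k * ε := by
            have h1 : (1:ℝ) ≤ 2^k := one_le_pow₀ one_le_two
            exact mul_le_mul_of_nonneg_right h1 hε.le
        _ ≤ ‖x‖ := hk1
  have hf1 : Measurable fun x : Eu n => ENNReal.ofReal (|u x| ^ p) := by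
    apply ENNReal.measurable_ofReal.comp
    exact humeas.abs.pow measurable_const
  have hfq : Measurable fun x : Eu n => ENNReal.ofReal (|u x| ^ q) := by
    apply ENNReal.measurable_ofReal.comp
    exact humeas.abs.pow measurable_const
  set I : ℕ → ℝ≥0∞ := fun k =>
    (∫⁻ x in ball (0 : Eu n) (2 ^ (k + 1) * ε), ENNReal.ofReal (|u x| ^ q)) ^ (p / q) with hI
  have key : ∀ k : ℕ, (∫⁻ x in A k, ENNReal.ofReal (|u x| ^ p / ‖x‖ ^ ((n:ℝ) + s*p)))
      ≤ (ENNReal.ofReal (2 ^ (s*p)) * B ^ (s*p/(n:ℝ)) * ENNReal.ofReal (ε ^ (-(n:ℝ)))) *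
        (ENNReal.ofReal ((2:ℝ) ^ (-(n:ℝ) * k)) * I k) := by
    intro k
    have hrk : (0:ℝ) < 2 ^ k * ε := by positivity
    have hRk : (0:ℝ) < 2 ^ (k+1) * ε := by positivity
    have step1 : (∫⁻ x in A k, ENNReal.ofReal (|u x| ^ p / ‖x‖ ^ ((n:ℝ) + s*p)))
        ≤ ENNReal.ofReal ((2 ^ k * ε) ^ (-((n:ℝ) + s*p))) *
            ∫⁻ x in A k, ENNReal.ofReal (|u x| ^ p) := by
      rw [← lintegral_const_mul' _ _ ENNReal.ofReal_ne_top]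
      refine setLIntegral_mono (by measurability) ?_
      intro x hx
      rw [← ENNReal.ofReal_mul (by positivity)]
      apply ENNReal.ofReal_le_ofReal
      have hx1 : 2 ^ k * ε ≤ ‖x‖ := hx.1
      have hb : (2 ^ k * ε) ^ ((n:ℝ)+s*p) ≤ ‖x‖ ^ ((n:ℝ)+s*p) :=
        Real.rpow_le_rpow hrk.le hx1 (by positivity)
      calc |u x|^p / ‖x‖^((n:ℝ)+s*p) ≤ |u x|^p / (2 ^ k * ε)^((n:ℝ)+s*p) := by
            apply div_le_div_of_nonneg_left (by positivity) (Real.rpow_pos_of_pos hrk _) hb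
        _ = (2 ^ k * ε)^(-((n:ℝ)+s*p)) * |u x|^p := by
            rw [Real.rpow_neg hrk.le, div_eq_inv_mul]
    have step2 : (∫⁻ x in A k, ENNReal.ofReal (|u x| ^ p))
        ≤ (∫⁻ x in A k, ENNReal.ofReal (|u x| ^ q)) ^ (p/q) *
            (volume (A k)) ^ (s*p/(n:ℝ)) := by
      have h := ENNReal.lintegral_mul_le_Lp_mul_Lq (volume.restrict (A k)) hconj
        (g := fun _ => 1) hf1.aemeasurable aemeasurable_const
      simp only [Pi.mul_apply, Pi.one_apply, mul_one, ENNReal.one_rpow] at h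
      rw [lintegral_one, Measure.restrict_apply_univ, one_div_div, one_div_div] at h
      have hfr : ∀ x : Eu n, (ENNReal.ofReal (|u x| ^ p)) ^ (q/p) = ENNReal.ofReal (|u x| ^ q) := by
        intro x
        rw [ENNReal.ofReal_rpow_of_nonneg (by positivity) (by positivity),
          ← Real.rpow_mul (abs_nonneg _), hpqne]
      simp_rw [hfr] at h
      exact h
    have hsub : A k ⊆ ball (0:Eu n) (2 ^ (k+1) * ε) := by
      intro x hx
      rw [mem_ball_zero_iff]
      exact hx.2
    have hmeasle : volume (A k) ≤ ENNReal.ofReal ((2 ^ (k+1) * ε) ^ (n:ℝ)) * B := by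
      calc volume (A k) ≤ volume (ball (0:Eu n) (2 ^ (k+1) * ε)) := measure_mono hsub
        _ = ENNReal.ofReal ((2 ^ (k+1) * ε) ^ Module.finrank ℝ (Eu n)) * B :=
            Measure.addHaar_ball _ _ hRk.le
        _ = _ := by
            rw [finrank_euclideanSpace_fin, ← Real.rpow_natCast (2 ^ (k+1) * ε) n]
    have hreal : ((2:ℝ) ^ k * ε) ^ (-((n:ℝ) + s*p)) *
          (((2:ℝ) ^ (k+1) * ε) ^ (n:ℝ)) ^ (s*p/(n:ℝ))
        = 2 ^ (s*p) * 2 ^ (-(n:ℝ) * k) * ε ^ (-(n:ℝ)) := by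
      have e1 : ((2:ℝ) ^ k * ε) ^ (-((n:ℝ) + s*p))
          = 2 ^ ((k:ℝ) * (-((n:ℝ)+s*p))) * ε ^ (-((n:ℝ)+s*p)) := by
        rw [Real.mul_rpow (by positivity) hε.le, ← Real.rpow_natCast 2 k,
          ← Real.rpow_mul (by norm_num)]
      have hNF : (n:ℝ) * (s*p/(n:ℝ)) = s * p := by field_simp
      have e2 : (((2:ℝ) ^ (k+1) * ε) ^ (n:ℝ)) ^ (s*p/(n:ℝ))
          = 2 ^ (((k:ℝ)+1) * (s*p)) * ε ^ (s*p) := by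
        rw [← Real.rpow_mul (by positivity), hNF, Real.mul_rpow (by positivity) hε.le,
          ← Real.rpow_natCast 2 (k+1), ← Real.rpow_mul (by norm_num)]
        push_cast
        ring_nf
      rw [e1, e2, mul_mul_mul_comm, ← Real.rpow_add two_pos, ← Real.rpow_add hε,
        show (2:ℝ) ^ (s*p) * 2 ^ (-(n:ℝ) * k) * ε ^ (-(n:ℝ)) =
          2 ^ (s*p + -(n:ℝ) * k) * ε ^ (-(n:ℝ)) from by rw [← Real.rpow_add two_pos]]
      congr 1
      · congr 1
        ring
      · congr 1
        ring
    calc (∫⁻ x in A k, ENNReal.ofReal (|u x| ^ p / ‖x‖ ^ ((n:ℝ) + s*p)))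
        ≤ ENNReal.ofReal ((2 ^ k * ε) ^ (-((n:ℝ) + s*p))) *
            ∫⁻ x in A k, ENNReal.ofReal (|u x| ^ p) := step1
      _ ≤ ENNReal.ofReal ((2 ^ k * ε) ^ (-((n:ℝ) + s*p))) *
          ((∫⁻ x in A k, ENNReal.ofReal (|u x| ^ q)) ^ (p/q) *
            (volume (A k)) ^ (s*p/(n:ℝ))) := mul_le_mul_right step2 _
      _ ≤ ENNReal.ofReal ((2 ^ k * ε) ^ (-((n:ℝ) + s*p))) *
          ((∫⁻ x in ball (0:Eu n) (2 ^ (k+1) * ε), ENNReal.ofReal (|u x| ^ q)) ^ (p/q) *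
            (ENNReal.ofReal ((2 ^ (k+1) * ε) ^ (n:ℝ)) * B) ^ (s*p/(n:ℝ))) := by
          gcongr
      _ = (ENNReal.ofReal (2 ^ (s*p)) * B ^ (s*p/(n:ℝ)) * ENNReal.ofReal (ε ^ (-(n:ℝ)))) *
          (ENNReal.ofReal ((2:ℝ) ^ (-(n:ℝ) * k)) * I k) := by
          rw [ENNReal.mul_rpow_of_nonneg _ _ (by positivity),
            ENNReal.ofReal_rpow_of_nonneg (by positivity) (by positivity)]
          have hc : ENNReal.ofReal (((2:ℝ) ^ k * ε) ^ (-((n:ℝ) + s*p))) *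
              ENNReal.ofReal ((((2:ℝ) ^ (k+1) * ε) ^ (n:ℝ)) ^ (s*p/(n:ℝ)))
              = ENNReal.ofReal (2 ^ (s*p)) * ENNReal.ofReal ((2:ℝ) ^ (-(n:ℝ)*k)) *
                ENNReal.ofReal (ε ^ (-(n:ℝ))) := by
            rw [← ENNReal.ofReal_mul (by positivity), hreal,
              ENNReal.ofReal_mul (by positivity), ENNReal.ofReal_mul (by positivity)]
          calc ENNReal.ofReal (((2:ℝ) ^ k * ε) ^ (-((n:ℝ) + s*p))) *
              ((∫⁻ x in ball (0:Eu n) (2 ^ (k+1) * ε), ENNReal.ofReal (|u x| ^ q)) ^ (p/q) *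
                (ENNReal.ofReal ((((2:ℝ) ^ (k+1) * ε) ^ (n:ℝ)) ^ (s*p/(n:ℝ))) * B ^ (s*p/(n:ℝ))))
              = (ENNReal.ofReal (((2:ℝ) ^ k * ε) ^ (-((n:ℝ) + s*p))) *
                  ENNReal.ofReal ((((2:ℝ) ^ (k+1) * ε) ^ (n:ℝ)) ^ (s*p/(n:ℝ)))) *
                (B ^ (s*p/(n:ℝ)) * I k) := by rw [hI]; ring
            _ = _ := by rw [hc]; ring
  rw [hcover, lintegral_iUnion hAm hAdis]
  have hεε : ENNReal.ofReal (ε ^ ((n:ℕ):ℝ)) * ENNReal.ofReal (ε ^ (-(n:ℝ))) = 1 := by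
    rw [← ENNReal.ofReal_mul (by positivity), ← Real.rpow_add hε]
    simp
  calc ENNReal.ofReal (ε ^ ((n:ℕ):ℝ)) *
        ∑' k : ℕ, ∫⁻ x in A k, ENNReal.ofReal (|u x| ^ p / ‖x‖ ^ ((n:ℝ) + s*p))
      ≤ ENNReal.ofReal (ε ^ ((n:ℕ):ℝ)) *
        ∑' k : ℕ, (ENNReal.ofReal (2 ^ (s*p)) * B ^ (s*p/(n:ℝ)) * ENNReal.ofReal (ε ^ (-(n:ℝ)))) *
          (ENNReal.ofReal ((2:ℝ) ^ (-(n:ℝ) * k)) * I k) :=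
        mul_le_mul_right (ENNReal.tsum_le_tsum key) _
    _ = ENNReal.ofReal (ε ^ ((n:ℕ):ℝ)) *
        ((ENNReal.ofReal (2 ^ (s*p)) * B ^ (s*p/(n:ℝ)) * ENNReal.ofReal (ε ^ (-(n:ℝ)))) *
          ∑' k : ℕ, ENNReal.ofReal ((2:ℝ) ^ (-(n:ℝ) * k)) * I k) := by
        rw [ENNReal.tsum_mul_left]
    _ = ENNReal.ofReal (2 ^ (s*p) * (B.toReal) ^ (s*p/(n:ℝ))) *
          ∑' k : ℕ, ENNReal.ofReal ((2:ℝ) ^ (-(n:ℝ) * k)) * I k := by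
        rw [ENNReal.ofReal_mul (by positivity), ENNReal.toReal_rpow,
          ENNReal.ofReal_toReal (ENNReal.rpow_ne_top_of_nonneg (by positivity) hBtop)]
        calc ENNReal.ofReal (ε ^ ((n:ℕ):ℝ)) *
            ((ENNReal.ofReal (2 ^ (s*p)) * B ^ (s*p/(n:ℝ)) * ENNReal.ofReal (ε ^ (-(n:ℝ)))) *
              ∑' k : ℕ, ENNReal.ofReal ((2:ℝ) ^ (-(n:ℝ) * k)) * I k)
            = (ENNReal.ofReal (ε ^ ((n:ℕ):ℝ)) * ENNReal.ofReal (ε ^ (-(n:ℝ)))) *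
              ((ENNReal.ofReal (2 ^ (s*p)) * B ^ (s*p/(n:ℝ))) *
                ∑' k : ℕ, ENNReal.ofReal ((2:ℝ) ^ (-(n:ℝ) * k)) * I k) := by ring
          _ = _ := by rw [hεε, one_mul]
end
end

section
/- Let (u_k) ⊂ D^{s,p}(R^n) be bounded with |D^s u_k|^p dx ⇀ μ weakly-* as measures, μ finite. Define μ_∞ = lim_{R→∞} limsup_{k→∞} ∫_{|x|>R} |D^s u_k|^p dx. Then limsup_{k→∞} ∫_{R^n} |D^s u_k|^p dx = μ(R^n) + μ_∞. -/
open MeasureTheory ENNReal Filter Metric Topology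

noncomputable section

/-- Helper: `limsup (c + g) = c + limsup g` in `ℝ≥0∞`. -/
lemma elimsup_const_add' (c : ℝ≥0∞) (g : ℕ → ℝ≥0∞) :
    limsup (fun k => c + g k) atTop = c + limsup g atTop := by
  apply limsup_const_add atTop g c
  · exact isBoundedUnder_of ⟨⊤, fun _ => le_top⟩
  · exact (isBoundedUnder_of (⟨0, fun _ => zero_le⟩ :
      ∃ b, ∀ x, (fun x1 x2 => x1 ≥ x2) (g x) b)).isCoboundedUnder_le

/-- Helper: upper bound for `limsup` of a sum when one term converges. -/
lemma elimsup_add_le_of_tendsto {f g : ℕ → ℝ≥0∞} {L : ℝ≥0∞}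
    (hf : Tendsto f atTop (𝓝 L)) :
    limsup (fun k => f k + g k) atTop ≤ L + limsup g atTop := by
  refine ENNReal.le_of_forall_pos_le_add fun ε hε hfin => ?_
  have hLt : L ≠ ⊤ := fun h => by simp [h] at hfin
  have hL : L < L + ε := ENNReal.lt_add_right hLt (by exact_mod_cast hε.ne')
  have hev : ∀ᶠ k in atTop, f k < L + ε := hf.eventually_lt_const hL
  calc limsup (fun k => f k + g k) atTop
      ≤ limsup (fun k => (L + ε) + g k) atTop :=
        limsup_le_limsup (hev.mono fun k hk => add_le_add hk.le le_rfl)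
    _ = (L + ε) + limsup g atTop := elimsup_const_add' _ _
    _ = (L + limsup g atTop) + ε := by rw [add_right_comm]

/-- Helper: lower bound for `limsup` of a sum when one term converges. -/
lemma le_elimsup_add_of_tendsto {f g : ℕ → ℝ≥0∞} {L : ℝ≥0∞} (hLt : L ≠ ⊤)
    (hf : Tendsto f atTop (𝓝 L)) :
    L + limsup g atTop ≤ limsup (fun k => f k + g k) atTop := by
  have hg : limsup g atTop ≤ limsup (fun k => f k + g k) atTop :=
    limsup_le_limsup (Filter.Eventually.of_forall fun k => le_add_self)
  refine ENNReal.le_of_forall_pos_le_add fun ε hε _ => ?_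
  rcases le_or_gt L (ε : ℝ≥0∞) with hcase | hcase
  · calc L + limsup g atTop ≤ (ε : ℝ≥0∞) + limsup g atTop := add_le_add_left hcase _
      _ = limsup g atTop + ε := add_comm _ _
      _ ≤ limsup (fun k => f k + g k) atTop + ε := add_le_add_left hg _
  · have h1 : L - ε < L :=
      ENNReal.sub_lt_self hLt ((zero_le.trans_lt hcase).ne')
        (by exact_mod_cast hε.ne')
    have hev : ∀ᶠ k in atTop, L - ε < f k := hf.eventually_const_lt h1
    have hkey : (L - ε) + limsup g atTop ≤ limsup (fun k => f k + g k) atTop := by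
      calc (L - ε) + limsup g atTop = limsup (fun k => (L - ε) + g k) atTop :=
            (elimsup_const_add' _ _).symm
        _ ≤ limsup (fun k => f k + g k) atTop :=
            limsup_le_limsup (hev.mono fun k hk => add_le_add hk.le le_rfl)
    calc L + limsup g atTop = ((L - ε) + ε) + limsup g atTop := by
          rw [tsub_add_cancel_of_le hcase.le]
      _ = ((L - ε) + limsup g atTop) + ε := by rw [add_right_comm]
      _ ≤ limsup (fun k => f k + g k) atTop + ε := add_le_add_left hkey _

/-- Helper: `Dsp` of an a.e. strongly measurable function is a.e. measurable. -/
lemma aemeasurable_Dsp {n : ℕ} {s p : ℝ} {v : Eu n → ℝ}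
    (hv : AEMeasurable v (volume : Measure (Eu n))) :
    AEMeasurable (Dsp n s p v) (volume : Measure (Eu n)) := by
  obtain ⟨w, hw, hvw⟩ := hv
  refine ⟨Dsp n s p w, ?_, ?_⟩
  · have hmeas : Measurable (fun q : Eu n × Eu n =>
        ENNReal.ofReal (|w (q.1 + q.2) - w q.1| ^ p / ‖q.2‖ ^ ((n : ℝ) + s * p))) := by
      apply Measurable.ennreal_ofReal
      exact (((hw.comp (measurable_fst.add measurable_snd)).sub
        (hw.comp measurable_fst)).abs.pow_const p).div
        (measurable_snd.norm.pow_const _)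
    exact hmeas.lintegral_prod_right'
  · filter_upwards [hvw] with x hx
    unfold Dsp
    apply lintegral_congr_ae
    have hmp : MeasurePreserving (fun h : Eu n => x + h) volume volume :=
      measurePreserving_add_left volume x
    have hae : v ∘ (fun h : Eu n => x + h) =ᵐ[volume] w ∘ (fun h : Eu n => x + h) :=
      hmp.quasiMeasurePreserving.ae_eq_comp hvw
    filter_upwards [hae] with h hh
    simp only [Function.comp_apply] at hh
    rw [hx, hh]

/-- no loss of mass for the gradient measures:
`limsup_k ∫ |D^s u_k|^p dx = μ(ℝ^n) + μ_∞` where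
`μ_∞ = lim_{R→∞} limsup_k ∫_{|x|>R} |D^s u_k|^p dx`. -/
theorem limsup_gradient_splitting (n : ℕ) (s p : ℝ)
    (hs : 0 < s) (hs1 : s < 1) (hp : 1 < p) (hspn : s * p < n)
    (u : ℕ → Eu n → ℝ) (hmem : ∀ k, MemDsp n s p (u k))
    (hbd : ∃ B : ℝ, ∀ k, Gag n s p (u k) ≤ ENNReal.ofReal B)
    (μ : Measure (Eu n)) (hμfin : IsFiniteMeasure μ)
    (hμ : ∀ ψ : Eu n → ℝ, Continuous ψ → HasCompactSupport ψ → (∀ x, 0 ≤ ψ x) →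
      Tendsto (fun k => ∫⁻ x, ENNReal.ofReal (ψ x) * Dsp n s p (u k) x) atTop
        (𝓝 (∫⁻ x, ENNReal.ofReal (ψ x) ∂μ)))
    (μinf : ℝ≥0∞)
    (hμinf : Tendsto (fun R : ℝ =>
        limsup (fun k => ∫⁻ x in {x : Eu n | R < ‖x‖}, Dsp n s p (u k) x) atTop)
      atTop (𝓝 μinf)) :
    limsup (fun k => ∫⁻ x, Dsp n s p (u k) x) atTop = μ Set.univ + μinf := by
  have hDmeas : ∀ k, AEMeasurable (Dsp n s p (u k)) (volume : Measure (Eu n)) :=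
    fun k => aemeasurable_Dsp ((hmem k).1.aestronglyMeasurable.aemeasurable)
  -- the cutoff functions
  set ψ : ℝ → Eu n → ℝ := fun R x => max 0 (min 1 (R - ‖x‖)) with hψdef
  have hψcont : ∀ R, Continuous (ψ R) := fun R =>
    continuous_const.max (continuous_const.min (continuous_const.sub continuous_norm))
  have hψsupp : ∀ R, HasCompactSupport (ψ R) := by
    intro R
    apply HasCompactSupport.intro (isCompact_closedBall (0 : Eu n) R)
    intro x hx
    have hxn : R ≤ ‖x‖ :=
      (not_le.mp (by simpa [mem_closedBall_zero_iff] using hx)).le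
    have h1 : min 1 (R - ‖x‖) ≤ 0 := le_trans (min_le_right _ _) (by linarith)
    simp only [hψdef]
    exact max_eq_left h1
  have hψnn : ∀ R x, 0 ≤ ψ R x := fun R x => le_max_left _ _
  have hψle1 : ∀ R x, ψ R x ≤ 1 := fun R x =>
    max_le (by norm_num) (min_le_left _ _)
  have hψone : ∀ (R : ℝ) (x : Eu n), ‖x‖ ≤ R - 1 → ψ R x = 1 := by
    intro R x hx
    have : min 1 (R - ‖x‖) = 1 := min_eq_left (by linarith)
    simp only [hψdef, this]
    norm_num
  have hψzero : ∀ (R : ℝ) (x : Eu n), R ≤ ‖x‖ → ψ R x = 0 := by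
    intro R x hx
    have h1 : min 1 (R - ‖x‖) ≤ 0 := le_trans (min_le_right _ _) (by linarith)
    exact max_eq_left h1
  -- notation
  set F : ℝ → ℕ → ℝ≥0∞ :=
    fun R k => ∫⁻ x, ENNReal.ofReal (ψ R x) * Dsp n s p (u k) x with hFdef
  set G : ℝ → ℕ → ℝ≥0∞ :=
    fun R k => ∫⁻ x in {x : Eu n | R < ‖x‖}, Dsp n s p (u k) x with hGdef
  set L : ℝ → ℝ≥0∞ := fun R => ∫⁻ x, ENNReal.ofReal (ψ R x) ∂μ with hLdef
  have hF : ∀ R, Tendsto (F R) atTop (𝓝 (L R)) := fun R =>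
    hμ (ψ R) (hψcont R) (hψsupp R) (hψnn R)
  have hL_le : ∀ R, L R ≤ μ Set.univ := by
    intro R
    calc L R ≤ ∫⁻ _, 1 ∂μ :=
          lintegral_mono fun x => ENNReal.ofReal_le_one.2 (hψle1 R x)
      _ = μ Set.univ := by simp
  have hLne : ∀ R, L R ≠ ⊤ := fun R =>
    ((hL_le R).trans_lt (measure_lt_top μ _)).ne
  have hL_ge : ∀ R : ℝ, μ (closedBall 0 R) ≤ L (R + 1) := by
    intro R
    have : ∀ x : Eu n, (closedBall (0 : Eu n) R).indicator (1 : Eu n → ℝ≥0∞) x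
        ≤ ENNReal.ofReal (ψ (R + 1) x) := by
      intro x
      by_cases hx : x ∈ closedBall (0 : Eu n) R
      · rw [Set.indicator_of_mem hx]
        rw [hψone (R + 1) x (by simpa [mem_closedBall_zero_iff] using hx)]
        simp
      · rw [Set.indicator_of_notMem hx]
        exact zero_le
    calc μ (closedBall 0 R)
        = ∫⁻ x, (closedBall (0 : Eu n) R).indicator (1 : Eu n → ℝ≥0∞) x ∂μ := by
          rw [lintegral_indicator_one measurableSet_closedBall]
      _ ≤ L (R + 1) := lintegral_mono this
  have hGmeas : ∀ R : ℝ, MeasurableSet {x : Eu n | R < ‖x‖} :=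
    fun R => (isOpen_lt continuous_const continuous_norm).measurableSet
  -- upper splitting
  have hsplit_le : ∀ (R : ℝ) (k : ℕ),
      (∫⁻ x, Dsp n s p (u k) x) ≤ F (R + 1) k + G R k := by
    intro R k
    have key : ∀ x : Eu n, Dsp n s p (u k) x ≤
        ENNReal.ofReal (ψ (R + 1) x) * Dsp n s p (u k) x +
          {x : Eu n | R < ‖x‖}.indicator (Dsp n s p (u k)) x := by
      intro x
      by_cases h : R < ‖x‖
      · rw [Set.indicator_of_mem (show x ∈ {x : Eu n | R < ‖x‖} from h)]
        exact le_add_self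
      · push_neg at h
        rw [hψone (R + 1) x (by linarith)]
        simp
    calc (∫⁻ x, Dsp n s p (u k) x)
        ≤ ∫⁻ x, (ENNReal.ofReal (ψ (R + 1) x) * Dsp n s p (u k) x +
            {x : Eu n | R < ‖x‖}.indicator (Dsp n s p (u k)) x) := lintegral_mono key
      _ = F (R + 1) k + ∫⁻ x, {x : Eu n | R < ‖x‖}.indicator (Dsp n s p (u k)) x :=
          lintegral_add_left'
            (((hψcont (R + 1)).measurable.ennreal_ofReal.aemeasurable).mul (hDmeas k)) _
      _ = F (R + 1) k + G R k := by rw [lintegral_indicator (hGmeas R)]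
  -- lower splitting
  have hsplit_ge : ∀ (R : ℝ) (k : ℕ),
      F (R + 1) k + G (R + 1) k ≤ ∫⁻ x, Dsp n s p (u k) x := by
    intro R k
    have key : ∀ x : Eu n,
        ENNReal.ofReal (ψ (R + 1) x) * Dsp n s p (u k) x +
          {x : Eu n | R + 1 < ‖x‖}.indicator (Dsp n s p (u k)) x ≤ Dsp n s p (u k) x := by
      intro x
      by_cases h : R + 1 < ‖x‖
      · rw [Set.indicator_of_mem (show x ∈ {x : Eu n | R + 1 < ‖x‖} from h),
          hψzero (R + 1) x h.le]
        simp
      · rw [Set.indicator_of_notMem (show x ∉ {x : Eu n | R + 1 < ‖x‖} from h), add_zero]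
        calc ENNReal.ofReal (ψ (R + 1) x) * Dsp n s p (u k) x
            ≤ 1 * Dsp n s p (u k) x :=
              mul_le_mul_left (ENNReal.ofReal_le_one.2 (hψle1 _ x)) _
          _ = Dsp n s p (u k) x := one_mul _
    calc F (R + 1) k + G (R + 1) k
        = ∫⁻ x, (ENNReal.ofReal (ψ (R + 1) x) * Dsp n s p (u k) x +
            {x : Eu n | R + 1 < ‖x‖}.indicator (Dsp n s p (u k)) x) := by
          rw [lintegral_add_left' (f := fun x => ENNReal.ofReal (ψ (R + 1) x) * Dsp n s p (u k) x)
            (((hψcont (R + 1)).measurable.ennreal_ofReal.aemeasurable).mul (hDmeas k)) _,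
            lintegral_indicator (hGmeas (R + 1))]
      _ ≤ ∫⁻ x, Dsp n s p (u k) x := lintegral_mono key
  -- upper bound
  have hμinfG : Tendsto (fun R : ℝ => limsup (fun k => G R k) atTop) atTop (𝓝 μinf) := hμinf
  have hub : limsup (fun k => ∫⁻ x, Dsp n s p (u k) x) atTop ≤ μ Set.univ + μinf := by
    have h1 : ∀ R : ℝ, limsup (fun k => ∫⁻ x, Dsp n s p (u k) x) atTop
        ≤ μ Set.univ + limsup (fun k => G R k) atTop := by
      intro R
      calc limsup (fun k => ∫⁻ x, Dsp n s p (u k) x) atTop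
          ≤ limsup (fun k => F (R + 1) k + G R k) atTop :=
            limsup_le_limsup (Filter.Eventually.of_forall (hsplit_le R))
        _ ≤ L (R + 1) + limsup (fun k => G R k) atTop :=
            elimsup_add_le_of_tendsto (hF (R + 1))
        _ ≤ μ Set.univ + limsup (fun k => G R k) atTop :=
            add_le_add_left (hL_le _) _
    have h2 : Tendsto (fun R : ℝ => μ Set.univ + limsup (fun k => G R k) atTop)
        atTop (𝓝 (μ Set.univ + μinf)) := hμinfG.const_add _
    exact ge_of_tendsto' h2 h1
  -- lower bound
  have hlb : μ Set.univ + μinf ≤ limsup (fun k => ∫⁻ x, Dsp n s p (u k) x) atTop := by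
    have h1 : ∀ R : ℝ, μ (closedBall (0 : Eu n) R) + limsup (fun k => G (R + 1) k) atTop
        ≤ limsup (fun k => ∫⁻ x, Dsp n s p (u k) x) atTop := by
      intro R
      calc μ (closedBall (0 : Eu n) R) + limsup (fun k => G (R + 1) k) atTop
          ≤ L (R + 1) + limsup (fun k => G (R + 1) k) atTop :=
            add_le_add_left (hL_ge R) _
        _ ≤ limsup (fun k => F (R + 1) k + G (R + 1) k) atTop :=
            le_elimsup_add_of_tendsto (hLne _) (hF (R + 1))
        _ ≤ limsup (fun k => ∫⁻ x, Dsp n s p (u k) x) atTop :=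
            limsup_le_limsup (Filter.Eventually.of_forall (hsplit_ge R))
    have hball : Tendsto (fun R : ℝ => μ (closedBall (0 : Eu n) R)) atTop
        (𝓝 (μ Set.univ)) := by
      have hmono : Monotone (fun R : ℝ => closedBall (0 : Eu n) R) :=
        fun a b hab => closedBall_subset_closedBall hab
      have hunion : ⋃ R : ℝ, closedBall (0 : Eu n) R = Set.univ := by
        ext x
        simp only [Set.mem_iUnion, mem_closedBall_zero_iff, Set.mem_univ, iff_true]
        exact ⟨‖x‖, le_rfl⟩
      have := tendsto_measure_iUnion_atTop (μ := μ) hmono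
      rwa [hunion] at this
    have hshift : Tendsto (fun R : ℝ => limsup (fun k => G (R + 1) k) atTop) atTop
        (𝓝 μinf) :=
      hμinfG.comp (tendsto_atTop_add_const_right atTop 1 tendsto_id)
    have h2 : Tendsto
        (fun R : ℝ => μ (closedBall (0 : Eu n) R) + limsup (fun k => G (R + 1) k) atTop)
        atTop (𝓝 (μ Set.univ + μinf)) := hball.add hshift
    exact le_of_tendsto' h2 h1
  exact le_antisymm hub hlb
end
end

section
/- Flatness estimate for K: if K ∈ L^∞(R^n) satisfies |K(x) − K(0)| ≤ C|x|^α near 0 with α > α* := spn/(n − sp(p−1)), sp^2 < n, and U satisfies c_1 V ≤ U ≤ c_2 V for |x| ≥ 1 with V(x) = (1+|x|^{p'})^{-(n-sp)/p}, then ∫ |K(εx) − K(0)| U(x)^{p*_s} dx = o(ε^{sp}) as ε → 0. -/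
open MeasureTheory ENNReal Filter Metric Topology

noncomputable section

/-- flatness estimate for `K`: if `|K(x) − K(0)| ≤ C|x|^α` near `0` with
`α > α* = spn/(n − sp(p−1))`, `sp² < n`, and `c₁V ≤ U ≤ c₂V` for `|x| ≥ 1` with
`V(x) = (1+|x|^{p'})^{-(n-sp)/p}`, then `∫ |K(εx) − K(0)| U^{p*_s} dx = o(ε^{sp})` as `ε → 0⁺`. -/
theorem flatness_estimate (n : ℕ) (s p : ℝ)
    (hs : 0 < s) (hs1 : s < 1) (hp : 1 < p) (hsp2 : s * p ^ 2 < n)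
    (K : Eu n → ℝ) (hKcont : Continuous K) (MK : ℝ) (hKbd : ∀ x, |K x| ≤ MK)
    (C α : ℝ) (hC : 0 < C) (hα : s * p * n / (n - s * p * (p - 1)) < α)
    (hflat : ∀ x : Eu n, ‖x‖ ≤ 1 → |K x - K 0| ≤ C * ‖x‖ ^ α)
    (U : Eu n → ℝ) (hU0 : ∀ x, 0 ≤ U x) (hUmeas : Measurable U)
    (hUint : Integrable (fun x => U x ^ (n * p / (n - s * p))))
    (c1 c2 : ℝ) (hc1 : 0 < c1) (hc2 : 0 < c2)
    (hUdecay : ∀ x : Eu n, 1 ≤ ‖x‖ →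
      c1 * (1 + ‖x‖ ^ (p / (p - 1))) ^ (-((n : ℝ) - s * p) / p) ≤ U x ∧
      U x ≤ c2 * (1 + ‖x‖ ^ (p / (p - 1))) ^ (-((n : ℝ) - s * p) / p)) :
    Tendsto (fun ε : ℝ =>
        (∫ x, |K (ε • x) - K 0| * U x ^ (n * p / (n - s * p))) / ε ^ (s * p))
      (𝓝[>] 0) (𝓝 0) := by
  have hp0 : (0:ℝ) < p := lt_trans one_pos hp
  have hp1 : (0:ℝ) < p - 1 := sub_pos.mpr hp
  have hsp : 0 < s * p := mul_pos hs hp0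
  have hn0 : (0:ℝ) < n := lt_trans (by positivity) hsp2
  have hnsp : s * p < n := by nlinarith
  have hnsp0 : (0:ℝ) < n - s * p := sub_pos.mpr hnsp
  set q : ℝ := n * p / (n - s * p) with hqdef
  have hq0 : 0 < q := div_pos (mul_pos hn0 hp0) hnsp0
  have hMK : 0 ≤ MK := (abs_nonneg _).trans (hKbd 0)
  set C₃ : ℝ := max C (2 * MK) with hC₃def
  have hC₃ : 0 ≤ C₃ := le_trans hC.le (le_max_left _ _)
  have hsplt : s * p < n / (p - 1) := by
    rw [lt_div_iff₀ hp1]; nlinarith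
  set γ : ℝ := min α ((s * p + n / (p - 1)) / 2) with hγdef
  have hd0 : (0:ℝ) < n - s * p * (p - 1) := by nlinarith
  have hspα : s * p < α := by
    refine lt_trans ?_ hα
    rw [lt_div_iff₀ hd0]
    nlinarith [mul_pos hsp (mul_pos hsp hp1)]
  have hγsp : s * p < γ := lt_min hspα (by linarith)
  have hγ0 : 0 < γ := hsp.trans hγsp
  have hγα : γ ≤ α := min_le_left _ _
  have hγlt : γ < n / (p - 1) := lt_of_le_of_lt (min_le_right _ _) (by linarith)
  set r : ℝ := n * (p / (p - 1)) - γ with hrdef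
  have hnr : (n:ℝ) < r := by
    have hsum : (n:ℝ) / (p - 1) + n = n * (p / (p - 1)) := by field_simp; ring
    rw [hrdef]; linarith
  have hr0 : (0:ℝ) < r := lt_trans hn0 hnr
  set W : Eu n → ℝ := fun x => ‖x‖ ^ γ * U x ^ q with hWdef
  have hWmeas : Measurable W :=
    (measurable_norm.pow measurable_const).mul (hUmeas.pow measurable_const)
  have hW0 : ∀ x, 0 ≤ W x := fun x =>
    mul_nonneg (Real.rpow_nonneg (norm_nonneg x) _) (Real.rpow_nonneg (hU0 x) _)
  -- pointwise bound on W outside the unit ball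
  have hWbound : ∀ x : Eu n, 1 ≤ ‖x‖ → W x ≤ c2 ^ q * 2 ^ r * (1 + ‖x‖) ^ (-r) := by
    intro x hx1
    have ht0 : (0:ℝ) < ‖x‖ := lt_of_lt_of_le one_pos hx1
    have htp : (0:ℝ) < ‖x‖ ^ (p / (p - 1)) := Real.rpow_pos_of_pos ht0 _
    have hB0 : (0:ℝ) < 1 + ‖x‖ ^ (p / (p - 1)) := by linarith
    have hUq : U x ^ q ≤ c2 ^ q * (‖x‖ ^ (p / (p - 1))) ^ (-(n:ℝ)) := by
      have h1 : U x ^ q ≤ (c2 * (1 + ‖x‖ ^ (p / (p - 1))) ^ (-((n:ℝ) - s * p) / p)) ^ q :=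
        Real.rpow_le_rpow (hU0 x) (hUdecay x hx1).2 hq0.le
      have h2 : (c2 * (1 + ‖x‖ ^ (p / (p - 1))) ^ (-((n:ℝ) - s * p) / p)) ^ q
          = c2 ^ q * (1 + ‖x‖ ^ (p / (p - 1))) ^ ((-((n:ℝ) - s * p) / p) * q) := by
        rw [Real.mul_rpow hc2.le (Real.rpow_nonneg hB0.le _), ← Real.rpow_mul hB0.le]
      have haq : (-((n:ℝ) - s * p) / p) * q = -(n:ℝ) := by
        rw [hqdef]; field_simp
      have h3 : (1 + ‖x‖ ^ (p / (p - 1))) ^ (-(n:ℝ)) ≤ (‖x‖ ^ (p / (p - 1))) ^ (-(n:ℝ)) :=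
        Real.rpow_le_rpow_of_nonpos htp (by linarith) (by linarith)
      calc U x ^ q ≤ _ := h1
        _ = c2 ^ q * (1 + ‖x‖ ^ (p / (p - 1))) ^ (-(n:ℝ)) := by rw [h2, haq]
        _ ≤ c2 ^ q * (‖x‖ ^ (p / (p - 1))) ^ (-(n:ℝ)) :=
            mul_le_mul_of_nonneg_left h3 (Real.rpow_nonneg hc2.le _)
    have hW1 : W x ≤ c2 ^ q * ‖x‖ ^ (-r) := by
      have hmul : (‖x‖ ^ (p / (p - 1))) ^ (-(n:ℝ)) = ‖x‖ ^ ((p / (p - 1)) * (-(n:ℝ))) :=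
        (Real.rpow_mul (norm_nonneg x) _ _).symm
      calc W x ≤ ‖x‖ ^ γ * (c2 ^ q * ‖x‖ ^ ((p / (p - 1)) * (-(n:ℝ)))) := by
            rw [← hmul]
            exact mul_le_mul_of_nonneg_left hUq (Real.rpow_nonneg (norm_nonneg x) _)
        _ = c2 ^ q * (‖x‖ ^ γ * ‖x‖ ^ ((p / (p - 1)) * (-(n:ℝ)))) := by ring
        _ = c2 ^ q * ‖x‖ ^ (γ + (p / (p - 1)) * (-(n:ℝ))) := by
            rw [← Real.rpow_add ht0]
        _ = c2 ^ q * ‖x‖ ^ (-r) := by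
            have : γ + (p / (p - 1)) * (-(n:ℝ)) = -r := by rw [hrdef]; ring
            rw [this]
    have hhalf : (1 + ‖x‖) / 2 ≤ ‖x‖ := by linarith
    have h4 : ‖x‖ ^ (-r) ≤ ((1 + ‖x‖) / 2) ^ (-r) :=
      Real.rpow_le_rpow_of_nonpos (by linarith) hhalf (by linarith)
    have h5 : ((1 + ‖x‖) / 2) ^ (-r) = 2 ^ r * (1 + ‖x‖) ^ (-r) := by
      rw [Real.div_rpow (by linarith) (by norm_num), Real.rpow_neg (by norm_num : (0:ℝ) ≤ 2),
        div_eq_mul_inv, inv_inv, mul_comm]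
    calc W x ≤ c2 ^ q * ‖x‖ ^ (-r) := hW1
      _ ≤ c2 ^ q * (2 ^ r * (1 + ‖x‖) ^ (-r)) := by
          refine mul_le_mul_of_nonneg_left ?_ (Real.rpow_nonneg hc2.le _)
          rw [← h5]; exact h4
      _ = c2 ^ q * 2 ^ r * (1 + ‖x‖) ^ (-r) := by ring
  have hWint : Integrable W := by
    rw [← MeasureTheory.integrableOn_univ,
      ← Set.union_compl_self (Metric.closedBall (0 : Eu n) 1)]
    refine MeasureTheory.IntegrableOn.union ?_ ?_
    · refine Integrable.mono' hUint.integrableOn hWmeas.aestronglyMeasurable.restrict ?_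
      filter_upwards [ae_restrict_mem measurableSet_closedBall] with x hx
      rw [Real.norm_eq_abs, abs_of_nonneg (hW0 x)]
      have hx1 : ‖x‖ ≤ 1 := mem_closedBall_zero_iff.mp hx
      calc W x ≤ 1 * U x ^ q :=
            mul_le_mul_of_nonneg_right (Real.rpow_le_one (norm_nonneg x) hx1 hγ0.le)
              (Real.rpow_nonneg (hU0 x) _)
        _ = U x ^ q := one_mul _
    · have hgint : Integrable (fun x : Eu n => c2 ^ q * 2 ^ r * (1 + ‖x‖) ^ (-r)) := by
        refine Integrable.const_mul ?_ _
        apply integrable_one_add_norm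
        rwa [finrank_euclideanSpace_fin]
      refine Integrable.mono' hgint.integrableOn hWmeas.aestronglyMeasurable.restrict ?_
      filter_upwards [ae_restrict_mem measurableSet_closedBall.compl] with x hx
      have hx1 : 1 ≤ ‖x‖ := by
        by_contra h
        exact hx (mem_closedBall_zero_iff.mpr (le_of_not_ge h))
      rw [Real.norm_eq_abs, abs_of_nonneg (hW0 x)]
      exact hWbound x hx1
  -- the key pointwise flatness bound
  have key : ∀ ε : ℝ, 0 < ε → ∀ x : Eu n,
      |K (ε • x) - K 0| ≤ C₃ * ε ^ γ * ‖x‖ ^ γ := by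
    intro ε hε x
    have hnorm : ‖ε • x‖ = ε * ‖x‖ := by
      rw [norm_smul, Real.norm_eq_abs, abs_of_pos hε]
    have hrw : ε ^ γ * ‖x‖ ^ γ = ‖ε • x‖ ^ γ := by
      rw [hnorm, Real.mul_rpow hε.le (norm_nonneg x)]
    rw [mul_assoc, hrw]
    rcases le_or_gt (‖ε • x‖) 1 with h1 | h1
    · rcases eq_or_lt_of_le (norm_nonneg (ε • x)) with h0 | h0
      · have hz : ε • x = 0 := norm_eq_zero.mp h0.symm
        rw [hz, sub_self, abs_zero, norm_zero, Real.zero_rpow (ne_of_gt hγ0), mul_zero]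
      · calc |K (ε • x) - K 0| ≤ C * ‖ε • x‖ ^ α := hflat _ h1
          _ ≤ C * ‖ε • x‖ ^ γ := mul_le_mul_of_nonneg_left
              (Real.rpow_le_rpow_of_exponent_ge h0 h1 hγα) hC.le
          _ ≤ C₃ * ‖ε • x‖ ^ γ := mul_le_mul_of_nonneg_right (le_max_left _ _)
              (Real.rpow_nonneg (norm_nonneg _) _)
    · have h2 : (1:ℝ) ≤ ‖ε • x‖ ^ γ := Real.one_le_rpow h1.le hγ0.le
      calc |K (ε • x) - K 0| ≤ |K (ε • x)| + |K 0| := abs_sub _ _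
        _ ≤ 2 * MK := by linarith [hKbd (ε • x), hKbd 0]
        _ ≤ 2 * MK * ‖ε • x‖ ^ γ := le_mul_of_one_le_right (by linarith) h2
        _ ≤ C₃ * ‖ε • x‖ ^ γ := mul_le_mul_of_nonneg_right (le_max_right _ _)
            (Real.rpow_nonneg (norm_nonneg _) _)
  have hFint : ∀ ε : ℝ, Integrable (fun x => |K (ε • x) - K 0| * U x ^ q) := by
    intro ε
    refine Integrable.mono' (hUint.const_mul (2 * MK)) ?_ ?_
    · exact ((((hKcont.comp (continuous_const_smul ε)).sub continuous_const).abs).measurable.mul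
        (hUmeas.pow measurable_const)).aestronglyMeasurable
    · refine Filter.Eventually.of_forall fun x => ?_
      rw [Real.norm_eq_abs,
        abs_of_nonneg (mul_nonneg (abs_nonneg _) (Real.rpow_nonneg (hU0 x) _))]
      refine mul_le_mul_of_nonneg_right ?_ (Real.rpow_nonneg (hU0 x) _)
      calc |K (ε • x) - K 0| ≤ |K (ε • x)| + |K 0| := abs_sub _ _
        _ ≤ 2 * MK := by linarith [hKbd (ε • x), hKbd 0]
  set I : ℝ := ∫ x, W x with hIdef
  have main : ∀ ε : ℝ, 0 < ε →
      (∫ x, |K (ε • x) - K 0| * U x ^ q) ≤ C₃ * ε ^ γ * I := by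
    intro ε hε
    have hpt : ∀ x, |K (ε • x) - K 0| * U x ^ q ≤ C₃ * ε ^ γ * W x := by
      intro x
      calc |K (ε • x) - K 0| * U x ^ q ≤ (C₃ * ε ^ γ * ‖x‖ ^ γ) * U x ^ q :=
            mul_le_mul_of_nonneg_right (key ε hε x) (Real.rpow_nonneg (hU0 x) _)
        _ = C₃ * ε ^ γ * W x := by rw [hWdef]; ring
    have h := integral_mono (hFint ε) (hWint.const_mul (C₃ * ε ^ γ)) hpt
    rwa [integral_const_mul] at h
  have hupper : Tendsto (fun ε : ℝ => C₃ * I * ε ^ (γ - s * p)) (𝓝[>] 0) (𝓝 0) := by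
    have h1 : Tendsto (fun ε : ℝ => ε ^ (γ - s * p)) (𝓝[>] 0) (𝓝 0) := by
      have hc : ContinuousAt (fun ε : ℝ => ε ^ (γ - s * p)) 0 :=
        Real.continuousAt_rpow_const 0 _ (Or.inr (by linarith))
      have h2 : Tendsto (fun ε : ℝ => ε ^ (γ - s * p)) (𝓝[>] (0:ℝ))
          (𝓝 ((0:ℝ) ^ (γ - s * p))) := hc.tendsto.mono_left nhdsWithin_le_nhds
      rwa [Real.zero_rpow (ne_of_gt (by linarith : (0:ℝ) < γ - s * p))] at h2
    have h3 := h1.const_mul (C₃ * I)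
    simpa using h3
  refine tendsto_of_tendsto_of_tendsto_of_le_of_le' tendsto_const_nhds hupper ?_ ?_
  · filter_upwards [self_mem_nhdsWithin] with ε hε
    exact div_nonneg (integral_nonneg fun x => mul_nonneg (abs_nonneg _)
      (Real.rpow_nonneg (hU0 x) _)) (Real.rpow_nonneg (le_of_lt hε) _)
  · filter_upwards [self_mem_nhdsWithin] with ε hε
    have hε' : (0:ℝ) < ε := hε
    rw [div_le_iff₀ (Real.rpow_pos_of_pos hε' _)]
    calc (∫ x, |K (ε • x) - K 0| * U x ^ q) ≤ C₃ * ε ^ γ * I := main ε hε'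
      _ = C₃ * I * ε ^ (γ - s * p) * ε ^ (s * p) := by
          have he : γ - s * p + s * p = γ := by ring
          rw [mul_assoc (C₃ * I), ← Real.rpow_add hε', he]; ring
end
end
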